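/- arXiv:2512.04174 — 5 statements merged into one kernel-verified Lean document; each statement's English description precedes it below -/
import Mathlib

section
/- Under the stated assumptions, the kernel of the deformed Hamiltonian H' equals the ℂ-linear span of the set {δ₀} ∪ {χ_a : a ∈ ker 𝔥}; in particular, since these vectors are linearly independent, dim ker H' = (number of elements of ker 𝔥) + 1. -/
open scoped Classical

section

/-- The bipartite (Tanner) graph on `Vhat ⊕ V` associated to the biadjacency matrix `𝔥`:
there is an edge between `w ∈ Vhat` and `v ∈ V` iff `𝔥 w v = 1`. -/
def bipGraph {Vhat V : Type*} (𝔥 : Matrix Vhat V (ZMod 2)) : SimpleGraph (Vhat ⊕ V) where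
  Adj x y := match x, y with
    | Sum.inl a, Sum.inr b => 𝔥 a b = 1
    | Sum.inr b, Sum.inl a => 𝔥 a b = 1
    | _, _ => False
  symm := ⟨by intro x y hxy; cases x <;> cases y <;> simp_all⟩
  loopless := ⟨by intro x hx; cases x <;> simp_all⟩

variable {Vhat V : Type*} [Fintype Vhat] [Fintype V] [DecidableEq Vhat] [DecidableEq V]

/-- The deformed Hamiltonian `H'` acting on `ℋ = EuclideanSpace ℂ (V → ZMod 2)`:
`(H'ψ)(σ) = ∑_{(v,w) : d(v,w) = 3} 𝟙[σ v = 1] · (ψ(σ) − ψ(σ + r_{w}))`. -/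
noncomputable def Hdef (𝔥 : Matrix Vhat V (ZMod 2)) :
    EuclideanSpace ℂ (V → ZMod 2) →ₗ[ℂ] EuclideanSpace ℂ (V → ZMod 2) where
  toFun ψ := WithLp.toLp 2 fun σ =>
    ∑ p : V × Vhat, if (bipGraph 𝔥).dist (Sum.inr p.1) (Sum.inl p.2) = 3 ∧ σ p.1 = 1
      then ψ σ - ψ (σ + fun v => 𝔥 p.2 v) else 0
  map_add' := by
    intro ψ φ
    ext σ
    show ((∑ p : V × Vhat, _ : ℂ)) = (∑ p : V × Vhat, _ : ℂ) + (∑ p : V × Vhat, _ : ℂ)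
    rw [← Finset.sum_add_distrib]
    refine Finset.sum_congr rfl fun p _ => ?_
    by_cases hp : (bipGraph 𝔥).dist (Sum.inr p.1) (Sum.inl p.2) = 3 ∧ σ p.1 = 1
    · simp only [if_pos hp, PiLp.add_apply]
      ring
    · simp [if_neg hp]
  map_smul' := by
    intro c ψ
    ext σ
    show ((∑ p : V × Vhat, _ : ℂ)) = c * (∑ p : V × Vhat, _ : ℂ)
    rw [Finset.mul_sum]
    refine Finset.sum_congr rfl fun p _ => ?_
    by_cases hp : (bipGraph 𝔥).dist (Sum.inr p.1) (Sum.inl p.2) = 3 ∧ σ p.1 = 1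
    · simp only [if_pos hp, PiLp.smul_apply, smul_eq_mul]
      ring
    · simp [if_neg hp]

/-- The delta function at the all-zeros configuration. -/
noncomputable def delta0 : EuclideanSpace ℂ (V → ZMod 2) :=
  WithLp.toLp 2 fun σ => if σ = 0 then 1 else 0

/-- The character `χ_a(σ) = (−1)^{a·σ}` where `a·σ = ∑_v a v · σ v ∈ ZMod 2`. -/
noncomputable def chi (a : V → ZMod 2) : EuclideanSpace ℂ (V → ZMod 2) :=
  WithLp.toLp 2 fun σ => if (∑ v, a v * σ v) = (1 : ZMod 2) then -1 else 1


set_option linter.unusedSectionVars false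
set_option linter.unusedVariables false
set_option maxHeartbeats 1000000

section AuxLemmas
variable {Vhat V : Type*} [Fintype Vhat] [Fintype V] [DecidableEq Vhat] [DecidableEq V]
variable {𝔥 : Matrix Vhat V (ZMod 2)}

lemma bip_adj_rl {v : V} {w : Vhat} : (bipGraph 𝔥).Adj (Sum.inr v) (Sum.inl w) ↔ 𝔥 w v = 1 :=
  Iff.rfl
lemma bip_adj_lr {v : V} {w : Vhat} : (bipGraph 𝔥).Adj (Sum.inl w) (Sum.inr v) ↔ 𝔥 w v = 1 :=
  Iff.rfl

lemma bip_adj_inr {v : V} {x : Vhat ⊕ V} (h : (bipGraph 𝔥).Adj (Sum.inr v) x) :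
    ∃ w, x = Sum.inl w ∧ 𝔥 w v = 1 := by
  cases x with
  | inl w => exact ⟨w, rfl, h⟩
  | inr v' => exact absurd h (by simp [bipGraph])

lemma bip_adj_inl {w : Vhat} {x : Vhat ⊕ V} (h : (bipGraph 𝔥).Adj (Sum.inl w) x) :
    ∃ v, x = Sum.inr v ∧ 𝔥 w v = 1 := by
  cases x with
  | inl w' => exact absurd h (by simp [bipGraph])
  | inr v => exact ⟨v, rfl, h⟩

lemma walk_parity : ∀ {x y : Vhat ⊕ V} (p : (bipGraph 𝔥).Walk x y),
    Even p.length ↔ (x.isLeft = y.isLeft) := by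
  intro x y p
  induction p with
  | nil => simp
  | @cons a b c h q ih =>
    have hab : a.isLeft = !b.isLeft := by
      cases a <;> cases b <;> simp_all [bipGraph]
    simp only [SimpleGraph.Walk.length_cons, Nat.even_add_one, ih, hab]
    cases b.isLeft <;> cases c.isLeft <;> simp

lemma dist_parity (hconn : (bipGraph 𝔥).Connected) (x y : Vhat ⊕ V) :
    Even ((bipGraph 𝔥).dist x y) ↔ (x.isLeft = y.isLeft) := by
  obtain ⟨p, hp⟩ := (hconn x y).exists_walk_length_eq_dist
  rw [← hp]; exact walk_parity p

lemma exists_adj_dist (hconn : (bipGraph 𝔥).Connected) {x y : Vhat ⊕ V} {n : ℕ}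
    (h : (bipGraph 𝔥).dist x y = n + 1) :
    ∃ z, (bipGraph 𝔥).Adj x z ∧ (bipGraph 𝔥).dist z y = n := by
  obtain ⟨p, hp⟩ := (hconn x y).exists_walk_length_eq_dist
  rw [h] at hp
  cases p with
  | nil => simp at hp
  | @cons _ z _ hadj q =>
    refine ⟨z, hadj, le_antisymm ?_ ?_⟩
    · have := (bipGraph 𝔥).dist_le q
      simp at hp; omega
    · have h1 : (bipGraph 𝔥).dist x y ≤ (bipGraph 𝔥).dist x z + (bipGraph 𝔥).dist z y :=
        hconn.dist_triangle
      have h2 : (bipGraph 𝔥).dist x z = 1 := SimpleGraph.dist_eq_one_iff_adj.mpr hadj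
      omega

lemma zmod2_ne_one {x : ZMod 2} (h : x ≠ 1) : x = 0 := by revert x; decide
lemma zmod2_ne_zero {x : ZMod 2} (h : x ≠ 0) : x = 1 := by revert x; decide

lemma dist_rl_odd (hconn : (bipGraph 𝔥).Connected) (v : V) (w : Vhat) :
    ¬ Even ((bipGraph 𝔥).dist (Sum.inr v) (Sum.inl w)) := by
  rw [dist_parity hconn]; simp

lemma not_adj_of_dist (hconn : (bipGraph 𝔥).Connected) {v : V} {w : Vhat}
    (h : (bipGraph 𝔥).dist (Sum.inr v) (Sum.inl w) ≠ 1) : 𝔥 w v = 0 := by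
  refine zmod2_ne_one fun h1 => h ?_
  exact SimpleGraph.dist_eq_one_iff_adj.mpr (bip_adj_rl.mpr h1)

lemma claimC (hconn : (bipGraph 𝔥).Connected) (ψ : (V → ZMod 2) → ℂ)
    (Hcon : ∀ (w : Vhat) (v : V) (σ : V → ZMod 2),
      (bipGraph 𝔥).dist (Sum.inr v) (Sum.inl w) = 3 → σ v = 1 → ψ σ = ψ (σ + 𝔥 w)) :
    ∀ (n : ℕ) (σ : V → ZMod 2) (w : Vhat) (v : V), σ v = 1 →
      3 ≤ (bipGraph 𝔥).dist (Sum.inr v) (Sum.inl w) →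
      (bipGraph 𝔥).dist (Sum.inr v) (Sum.inl w) ≤ n → ψ σ = ψ (σ + 𝔥 w) := by
  intro n
  induction n using Nat.strong_induction_on with
  | _ n ih =>
    intro σ w v hv h3 hn
    set F : Finset V := Finset.univ.filter
      (fun u => σ u = 1 ∧ 3 ≤ (bipGraph 𝔥).dist (Sum.inr u) (Sum.inl w)) with hF
    have hvF : v ∈ F := by simp [hF, hv, h3]
    obtain ⟨v', hv'F, hmin⟩ := F.exists_min_image
      (fun u => (bipGraph 𝔥).dist (Sum.inr u) (Sum.inl w)) ⟨v, hvF⟩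
    simp only [hF, Finset.mem_filter, Finset.mem_univ, true_and] at hv'F
    obtain ⟨hσv', h3'⟩ := hv'F
    set d := (bipGraph 𝔥).dist (Sum.inr v') (Sum.inl w) with hd
    have hdn : d ≤ n := le_trans (hmin v hvF) hn
    by_cases hd3 : d = 3
    · exact Hcon w v' σ (hd ▸ hd3) hσv'
    · have hodd : ¬ Even d := dist_rl_odd hconn v' w
      have hd5 : 5 ≤ d := by
        rcases Nat.even_or_odd d with he | ho
        · exact absurd he hodd
        · obtain ⟨k, hk⟩ := ho; omega
      obtain ⟨z₁, ha₁, hz₁⟩ := exists_adj_dist hconn (show _ = (d-1) + 1 by rw [← hd]; omega)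
      obtain ⟨w₁, rfl, h𝔥₁⟩ := bip_adj_inr ha₁
      obtain ⟨z₂, ha₂, hz₂⟩ := exists_adj_dist hconn (show _ = (d-2) + 1 by rw [hz₁]; omega)
      obtain ⟨u, rfl, h𝔥₂⟩ := bip_adj_inl ha₂
      obtain ⟨z₃, ha₃, hz₃⟩ := exists_adj_dist hconn (show _ = (d-3) + 1 by rw [hz₂]; omega)
      obtain ⟨w', rfl, h𝔥₃⟩ := bip_adj_inr ha₃
      have hvw' : (bipGraph 𝔥).dist (Sum.inr v') (Sum.inl w') = 3 := by
        have hle : (bipGraph 𝔥).dist (Sum.inr v') (Sum.inl w') ≤ 3 := by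
          have t1 : (bipGraph 𝔥).dist (Sum.inr v') (Sum.inl w') ≤
              (bipGraph 𝔥).dist (Sum.inr v') (Sum.inl w₁) +
              (bipGraph 𝔥).dist (Sum.inl w₁) (Sum.inl w') := hconn.dist_triangle
          have t2 : (bipGraph 𝔥).dist (Sum.inl w₁) (Sum.inl w') ≤
              (bipGraph 𝔥).dist (Sum.inl w₁) (Sum.inr u) +
              (bipGraph 𝔥).dist (Sum.inr u) (Sum.inl w') := hconn.dist_triangle
          have e1 : (bipGraph 𝔥).dist (Sum.inr v') (Sum.inl w₁) = 1 :=
            SimpleGraph.dist_eq_one_iff_adj.mpr ha₁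
          have e2 : (bipGraph 𝔥).dist (Sum.inl w₁) (Sum.inr u) = 1 :=
            SimpleGraph.dist_eq_one_iff_adj.mpr ha₂
          have e3 : (bipGraph 𝔥).dist (Sum.inr u) (Sum.inl w') = 1 :=
            SimpleGraph.dist_eq_one_iff_adj.mpr ha₃
          omega
        have hge : 3 ≤ (bipGraph 𝔥).dist (Sum.inr v') (Sum.inl w') := by
          have t1 : (bipGraph 𝔥).dist (Sum.inr v') (Sum.inl w) ≤
              (bipGraph 𝔥).dist (Sum.inr v') (Sum.inl w') +
              (bipGraph 𝔥).dist (Sum.inl w') (Sum.inl w) := hconn.dist_triangle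
          rw [← hd] at t1; omega
        omega
      have step1 : ψ σ = ψ (σ + 𝔥 w') := Hcon w' v' σ hvw' hσv'
      have hσu : σ u = 0 := by
        refine zmod2_ne_one fun h1 => ?_
        have huF : u ∈ F := by
          simp only [hF, Finset.mem_filter, Finset.mem_univ, true_and]
          exact ⟨h1, by omega⟩
        have := hmin u huF
        omega
      have hσ'u : (σ + 𝔥 w') u = 1 := by
        simp [Pi.add_apply, hσu, h𝔥₃]
      have step2 : ψ (σ + 𝔥 w') = ψ ((σ + 𝔥 w') + 𝔥 w) := by
        have g1 : 3 ≤ (bipGraph 𝔥).dist (Sum.inr u) (Sum.inl w) := by rw [hz₂]; omega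
        have g2 : (bipGraph 𝔥).dist (Sum.inr u) (Sum.inl w) ≤ d - 2 := by rw [hz₂]
        exact ih (d - 2) (by omega) (σ + 𝔥 w') w u hσ'u g1 g2
      have h𝔥wv' : 𝔥 w v' = 0 := not_adj_of_dist hconn (by rw [← hd]; omega)
      have hτv' : (σ + 𝔥 w) v' = 1 := by simp [Pi.add_apply, hσv', h𝔥wv']
      have step3 : ψ (σ + 𝔥 w) = ψ ((σ + 𝔥 w) + 𝔥 w') := Hcon w' v' (σ + 𝔥 w) hvw' hτv'
      rw [step1, step2, add_right_comm, ← step3]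

/-- vertices within distance 2 of a bit -/
lemma near_card (hconn : (bipGraph 𝔥).Connected) {D Dhat : ℕ} (hD : 1 ≤ D) (hDhat : 1 ≤ Dhat)
    (hdegV : ∀ v : V, (Finset.univ.filter fun w : Vhat => 𝔥 w v = 1).card ≤ D)
    (hdegVhat : ∀ w : Vhat, (Finset.univ.filter fun v : V => 𝔥 w v = 1).card ≤ Dhat)
    (v₀ : V) :
    (Finset.univ.filter fun u : V =>
      (bipGraph 𝔥).dist (Sum.inr u) (Sum.inr v₀) ≤ 2).card ≤ D * Dhat := by
  have hchar : ∀ u : V, (bipGraph 𝔥).dist (Sum.inr u) (Sum.inr v₀) ≤ 2 →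
      u = v₀ ∨ ∃ w, 𝔥 w u = 1 ∧ 𝔥 w v₀ = 1 := by
    intro u hu
    have heven : Even ((bipGraph 𝔥).dist (Sum.inr u) (Sum.inr v₀)) := by
      rw [dist_parity hconn]; rfl
    interval_cases hdu : (bipGraph 𝔥).dist (Sum.inr u) (Sum.inr v₀)
    · left
      have := (hconn.dist_eq_zero_iff (u := Sum.inr u) (v := Sum.inr v₀)).mp hdu
      exact Sum.inr_injective this
    · exact absurd heven (by decide)
    · right
      obtain ⟨z, hz, hz1⟩ := exists_adj_dist hconn (show _ = 1 + 1 from hdu)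
      obtain ⟨w, rfl, hw⟩ := bip_adj_inr hz
      have : (bipGraph 𝔥).Adj (Sum.inl w) (Sum.inr v₀) :=
        SimpleGraph.dist_eq_one_iff_adj.mp hz1
      exact ⟨w, hw, bip_adj_lr.mp this⟩
  by_cases hex : ∃ w₀, 𝔥 w₀ v₀ = 1
  · obtain ⟨w₀, hw₀⟩ := hex
    have hsub : (Finset.univ.filter fun u : V =>
        (bipGraph 𝔥).dist (Sum.inr u) (Sum.inr v₀) ≤ 2) ⊆
        (Finset.univ.filter fun w : Vhat => 𝔥 w v₀ = 1).biUnion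
          (fun w => Finset.univ.filter fun u : V => 𝔥 w u = 1) := by
      intro u hu
      simp only [Finset.mem_filter, Finset.mem_univ, true_and] at hu
      rcases hchar u hu with rfl | ⟨w, h1, h2⟩
      · exact Finset.mem_biUnion.mpr ⟨w₀, by simp [hw₀]⟩
      · exact Finset.mem_biUnion.mpr ⟨w, by simp [h1, h2]⟩
    calc _ ≤ _ := Finset.card_le_card hsub
    _ ≤ ∑ w ∈ (Finset.univ.filter fun w : Vhat => 𝔥 w v₀ = 1),
          (Finset.univ.filter fun u : V => 𝔥 w u = 1).card := Finset.card_biUnion_le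
    _ ≤ ∑ _w ∈ (Finset.univ.filter fun w : Vhat => 𝔥 w v₀ = 1), Dhat :=
          Finset.sum_le_sum fun w _ => hdegVhat w
    _ = (Finset.univ.filter fun w : Vhat => 𝔥 w v₀ = 1).card * Dhat := by
          rw [Finset.sum_const, smul_eq_mul]
    _ ≤ D * Dhat := Nat.mul_le_mul_right _ (hdegV v₀)
  · push_neg at hex
    have hsub : (Finset.univ.filter fun u : V =>
        (bipGraph 𝔥).dist (Sum.inr u) (Sum.inr v₀) ≤ 2) ⊆ {v₀} := by
      intro u hu
      simp only [Finset.mem_filter, Finset.mem_univ, true_and] at hu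
      rcases hchar u hu with rfl | ⟨w, _, h2⟩
      · exact Finset.mem_singleton_self _
      · exact absurd h2 (by simpa using hex w)
    calc _ ≤ _ := Finset.card_le_card hsub
    _ = 1 := Finset.card_singleton _
    _ ≤ D * Dhat := Nat.one_le_iff_ne_zero.mpr (by positivity)

lemma exists_far (hconn : (bipGraph 𝔥).Connected) {D Dhat : ℕ} (hD : 1 ≤ D) (hDhat : 1 ≤ Dhat)
    (hdegV : ∀ v : V, (Finset.univ.filter fun w : Vhat => 𝔥 w v = 1).card ≤ D)
    (hdegVhat : ∀ w : Vhat, (Finset.univ.filter fun v : V => 𝔥 w v = 1).card ≤ Dhat)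
    (hcard : 2 * D * Dhat < Fintype.card V) (v₀ v₁ : V) :
    ∃ u : V, 4 ≤ (bipGraph 𝔥).dist (Sum.inr u) (Sum.inr v₀) ∧
      4 ≤ (bipGraph 𝔥).dist (Sum.inr u) (Sum.inr v₁) := by
  set S := (Finset.univ.filter fun u : V =>
      (bipGraph 𝔥).dist (Sum.inr u) (Sum.inr v₀) ≤ 2) ∪
    (Finset.univ.filter fun u : V =>
      (bipGraph 𝔥).dist (Sum.inr u) (Sum.inr v₁) ≤ 2) with hS
  have hcardS : S.card ≤ 2 * D * Dhat := by
    calc S.card ≤ _ + _ := Finset.card_union_le _ _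
    _ ≤ D * Dhat + D * Dhat := Nat.add_le_add
        (near_card hconn hD hDhat hdegV hdegVhat v₀)
        (near_card hconn hD hDhat hdegV hdegVhat v₁)
    _ = 2 * D * Dhat := by ring
  have : ∃ u : V, u ∉ S := by
    by_contra hall
    push_neg at hall
    have : (Finset.univ : Finset V) ⊆ S := fun u _ => hall u
    have := Finset.card_le_card this
    simp only [Finset.card_univ] at this
    omega
  obtain ⟨u, hu⟩ := this
  simp only [hS, Finset.mem_union, Finset.mem_filter, Finset.mem_univ, true_and, not_or,
    not_le] at hu
  refine ⟨u, ?_, ?_⟩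
  · have heven : Even ((bipGraph 𝔥).dist (Sum.inr u) (Sum.inr v₀)) := by
      rw [dist_parity hconn]; rfl
    obtain ⟨k, hk⟩ := heven; omega
  · have heven : Even ((bipGraph 𝔥).dist (Sum.inr u) (Sum.inr v₁)) := by
      rw [dist_parity hconn]; rfl
    obtain ⟨k, hk⟩ := heven; omega

lemma add_add_self (σ r : V → ZMod 2) : σ + r + r = σ := by
  funext v
  simp only [Pi.add_apply]
  have : r v + r v = 0 := by revert r; intro r; generalize r v = x; revert x; decide
  rw [add_assoc, this, add_zero]

/-- Main invariance: for `ψ` satisfying the constraints, `ψ` is invariant under adding any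
row, as long as both configurations are nonzero. -/
lemma mainInv (hconn : (bipGraph 𝔥).Connected) {D Dhat : ℕ} (hD : 1 ≤ D) (hDhat : 1 ≤ Dhat)
    (hdegV : ∀ v : V, (Finset.univ.filter fun w : Vhat => 𝔥 w v = 1).card ≤ D)
    (hdegVhat : ∀ w : Vhat, (Finset.univ.filter fun v : V => 𝔥 w v = 1).card ≤ Dhat)
    (hcard : 2 * D * Dhat < Fintype.card V) [Nonempty Vhat]
    (ψ : (V → ZMod 2) → ℂ)
    (Hcon : ∀ (w : Vhat) (v : V) (σ : V → ZMod 2),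
      (bipGraph 𝔥).dist (Sum.inr v) (Sum.inl w) = 3 → σ v = 1 → ψ σ = ψ (σ + 𝔥 w))
    (σ : V → ZMod 2) (w : Vhat) (hσ : σ ≠ 0) (hτ : σ + 𝔥 w ≠ 0) :
    ψ σ = ψ (σ + 𝔥 w) := by
  have CC : ∀ (σ : V → ZMod 2) (w : Vhat) (v : V), σ v = 1 →
      3 ≤ (bipGraph 𝔥).dist (Sum.inr v) (Sum.inl w) → ψ σ = ψ (σ + 𝔥 w) :=
    fun σ w v h1 h2 => claimC hconn ψ Hcon _ σ w v h1 h2 le_rfl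
  by_cases hA : ∃ v, σ v = 1 ∧ 3 ≤ (bipGraph 𝔥).dist (Sum.inr v) (Sum.inl w)
  · obtain ⟨v, h1, h2⟩ := hA; exact CC σ w v h1 h2
  by_cases hB : ∃ v, (σ + 𝔥 w) v = 1 ∧ 3 ≤ (bipGraph 𝔥).dist (Sum.inr v) (Sum.inl w)
  · obtain ⟨v, h1, h2⟩ := hB
    have := CC (σ + 𝔥 w) w v h1 h2
    rw [add_add_self] at this
    exact this.symm
  push_neg at hA hB
  -- every 1-bit of σ and of τ is adjacent to w
  have hadjall : ∀ (ρ : V → ZMod 2), (∀ v, ρ v = 1 →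
      (bipGraph 𝔥).dist (Sum.inr v) (Sum.inl w) < 3) → ∀ v, ρ v = 1 → 𝔥 w v = 1 := by
    intro ρ hρ v hv
    have hlt := hρ v hv
    have hne : (bipGraph 𝔥).dist (Sum.inr v) (Sum.inl w) ≠ 0 := by
      intro h0
      exact absurd ((hconn.dist_eq_zero_iff).mp h0) (by simp)
    have hodd := dist_rl_odd hconn v w
    have : (bipGraph 𝔥).dist (Sum.inr v) (Sum.inl w) = 1 := by
      interval_cases h : (bipGraph 𝔥).dist (Sum.inr v) (Sum.inl w) <;> simp_all <;> omega
    exact bip_adj_rl.mp (SimpleGraph.dist_eq_one_iff_adj.mp this)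
  have hadjσ := hadjall σ hA
  have hadjτ := hadjall (σ + 𝔥 w) hB
  obtain ⟨v₀, hv₀⟩ := Function.ne_iff.mp hσ
  have hv₀ : σ v₀ = 1 := zmod2_ne_zero (by simpa using hv₀)
  obtain ⟨v₁, hv₁⟩ := Function.ne_iff.mp hτ
  have hv₁ : (σ + 𝔥 w) v₁ = 1 := zmod2_ne_zero (by simpa using hv₁)
  obtain ⟨u, hu₀, hu₁⟩ := exists_far hconn hD hDhat hdegV hdegVhat hcard v₀ v₁
  -- find a check adjacent to u
  have hwu : ∃ wu : Vhat, 𝔥 wu u = 1 := by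
    obtain ⟨w₀⟩ := ‹Nonempty Vhat›
    have hne : (bipGraph 𝔥).dist (Sum.inr u) (Sum.inl w₀) ≠ 0 := by
      intro h0
      exact absurd ((hconn.dist_eq_zero_iff).mp h0) (by simp)
    obtain ⟨k, hk⟩ := Nat.exists_eq_succ_of_ne_zero hne
    obtain ⟨z, hz, _⟩ := exists_adj_dist hconn hk
    obtain ⟨wu, rfl, h⟩ := bip_adj_inr hz
    exact ⟨wu, h⟩
  obtain ⟨wu, hwu⟩ := hwu
  have hduwu : (bipGraph 𝔥).dist (Sum.inr u) (Sum.inl wu) = 1 :=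
    SimpleGraph.dist_eq_one_iff_adj.mpr (bip_adj_rl.mpr hwu)
  -- distances
  have hd₀ : 3 ≤ (bipGraph 𝔥).dist (Sum.inr v₀) (Sum.inl wu) := by
    have t : (bipGraph 𝔥).dist (Sum.inr u) (Sum.inr v₀) ≤
        (bipGraph 𝔥).dist (Sum.inr u) (Sum.inl wu) +
        (bipGraph 𝔥).dist (Sum.inl wu) (Sum.inr v₀) := hconn.dist_triangle
    rw [SimpleGraph.dist_comm (u := Sum.inl wu)] at t
    omega
  have hd₁ : 3 ≤ (bipGraph 𝔥).dist (Sum.inr v₁) (Sum.inl wu) := by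
    have t : (bipGraph 𝔥).dist (Sum.inr u) (Sum.inr v₁) ≤
        (bipGraph 𝔥).dist (Sum.inr u) (Sum.inl wu) +
        (bipGraph 𝔥).dist (Sum.inl wu) (Sum.inr v₁) := hconn.dist_triangle
    rw [SimpleGraph.dist_comm (u := Sum.inl wu)] at t
    omega
  have hdw : 3 ≤ (bipGraph 𝔥).dist (Sum.inr u) (Sum.inl w) := by
    have hwv₀ : (bipGraph 𝔥).dist (Sum.inl w) (Sum.inr v₀) = 1 := by
      rw [SimpleGraph.dist_comm]
      exact SimpleGraph.dist_eq_one_iff_adj.mpr (bip_adj_rl.mpr (hadjσ v₀ hv₀))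
    have t : (bipGraph 𝔥).dist (Sum.inr u) (Sum.inr v₀) ≤
        (bipGraph 𝔥).dist (Sum.inr u) (Sum.inl w) +
        (bipGraph 𝔥).dist (Sum.inl w) (Sum.inr v₀) := hconn.dist_triangle
    omega
  -- values at u
  have hσu : σ u = 0 := by
    refine zmod2_ne_one fun h1 => ?_
    have := hA u h1
    omega
  have hσ₂u : (σ + 𝔥 wu) u = 1 := by simp [Pi.add_apply, hσu, hwu]
  have e1 : ψ σ = ψ (σ + 𝔥 wu) := CC σ wu v₀ hv₀ hd₀
  have e2 : ψ (σ + 𝔥 wu) = ψ ((σ + 𝔥 wu) + 𝔥 w) := CC (σ + 𝔥 wu) w u hσ₂u hdw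
  have e3 : ψ (σ + 𝔥 w) = ψ ((σ + 𝔥 w) + 𝔥 wu) := CC (σ + 𝔥 w) wu v₁ hv₁ hd₁
  rw [e1, e2, add_right_comm, ← e3]

lemma sum_shift {v : V} {r : V → ZMod 2} (hr : r v = 0) (g : (V → ZMod 2) → ℂ) :
    ∑ σ ∈ Finset.univ.filter (fun σ : V → ZMod 2 => σ v = 1), g (σ + r) =
    ∑ σ ∈ Finset.univ.filter (fun σ : V → ZMod 2 => σ v = 1), g σ := by
  refine Finset.sum_nbij' (fun σ => σ + r) (fun σ => σ + r) ?_ ?_ ?_ ?_ ?_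
  · intro a ha
    simp only [Finset.mem_filter, Finset.mem_univ, true_and, Pi.add_apply, hr, add_zero] at *
    exact ha
  · intro a ha
    simp only [Finset.mem_filter, Finset.mem_univ, true_and, Pi.add_apply, hr, add_zero] at *
    exact ha
  · intro a _; exact add_add_self a r
  · intro a _; exact add_add_self a r
  · intro a _; rfl

open Complex in
lemma pair_sum_eq (ψ : (V → ZMod 2) → ℂ) {v : V} {r : V → ZMod 2} (hr : r v = 0) :
    2 * (∑ σ ∈ Finset.univ.filter (fun σ : V → ZMod 2 => σ v = 1),
        (starRingEnd ℂ) (ψ σ) * (ψ σ - ψ (σ + r))) =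
    ((∑ σ ∈ Finset.univ.filter (fun σ : V → ZMod 2 => σ v = 1),
        Complex.normSq (ψ σ - ψ (σ + r)) : ℝ) : ℂ) := by
  set A := Finset.univ.filter (fun σ : V → ZMod 2 => σ v = 1) with hA
  have hP : ∑ σ ∈ A, ψ (σ + r) * (starRingEnd ℂ) (ψ (σ + r)) =
      ∑ σ ∈ A, ψ σ * (starRingEnd ℂ) (ψ σ) :=
    sum_shift hr (fun σ => ψ σ * (starRingEnd ℂ) (ψ σ))
  have hQ : ∑ σ ∈ A, ψ σ * (starRingEnd ℂ) (ψ (σ + r)) =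
      ∑ σ ∈ A, ψ (σ + r) * (starRingEnd ℂ) (ψ σ) := by
    have := sum_shift hr (fun σ => ψ (σ + r) * (starRingEnd ℂ) (ψ σ))
    simp only [add_add_self] at this
    exact this
  have hc1 : ∑ σ ∈ A, (starRingEnd ℂ) (ψ σ) * ψ σ = ∑ σ ∈ A, ψ σ * (starRingEnd ℂ) (ψ σ) :=
    Finset.sum_congr rfl fun σ _ => mul_comm _ _
  have hc2 : ∑ σ ∈ A, (starRingEnd ℂ) (ψ σ) * ψ (σ + r) =
      ∑ σ ∈ A, ψ (σ + r) * (starRingEnd ℂ) (ψ σ) :=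
    Finset.sum_congr rfl fun σ _ => mul_comm _ _
  have hS : ∑ σ ∈ A, (starRingEnd ℂ) (ψ σ) * (ψ σ - ψ (σ + r)) =
      ∑ σ ∈ A, (starRingEnd ℂ) (ψ σ) * ψ σ - ∑ σ ∈ A, (starRingEnd ℂ) (ψ σ) * ψ (σ + r) := by
    rw [← Finset.sum_sub_distrib]
    exact Finset.sum_congr rfl fun σ _ => mul_sub _ _ _
  have hT : ∑ σ ∈ A, ((Complex.normSq (ψ σ - ψ (σ + r)) : ℝ) : ℂ) =
      ∑ σ ∈ A, ψ σ * (starRingEnd ℂ) (ψ σ) - ∑ σ ∈ A, ψ σ * (starRingEnd ℂ) (ψ (σ + r))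
      - ∑ σ ∈ A, ψ (σ + r) * (starRingEnd ℂ) (ψ σ)
      + ∑ σ ∈ A, ψ (σ + r) * (starRingEnd ℂ) (ψ (σ + r)) := by
    rw [← Finset.sum_sub_distrib, ← Finset.sum_sub_distrib, ← Finset.sum_add_distrib]
    refine Finset.sum_congr rfl fun σ _ => ?_
    rw [(Complex.mul_conj _).symm]
    simp only [map_sub]
    ring
  rw [Complex.ofReal_sum, hT, hS, hP, hQ, hc1, hc2]
  ring

/-- Extraction of the local constraints from kernel membership, via positivity. -/
lemma ker_constraints (hconn : (bipGraph 𝔥).Connected)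
    (ψ : EuclideanSpace ℂ (V → ZMod 2)) (hψ : Hdef 𝔥 ψ = 0) :
    ∀ (w : Vhat) (v : V) (σ : V → ZMod 2),
      (bipGraph 𝔥).dist (Sum.inr v) (Sum.inl w) = 3 → σ v = 1 → ψ σ = ψ (σ + 𝔥 w) := by
  have hval : ∀ σ : V → ZMod 2,
      (∑ p : V × Vhat, if (bipGraph 𝔥).dist (Sum.inr p.1) (Sum.inl p.2) = 3 ∧ σ p.1 = 1
        then ψ σ - ψ (σ + fun u => 𝔥 p.2 u) else 0) = 0 := by
    intro σ
    have h1 : (Hdef 𝔥 ψ) σ = (0 : EuclideanSpace ℂ (V → ZMod 2)) σ := by rw [hψ]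
    simpa [Hdef] using h1
  -- the complex quantity
  set Cq : V × Vhat → ℂ := fun p =>
    if (bipGraph 𝔥).dist (Sum.inr p.1) (Sum.inl p.2) = 3
    then ∑ σ ∈ Finset.univ.filter (fun σ : V → ZMod 2 => σ p.1 = 1),
      (starRingEnd ℂ) (ψ σ) * (ψ σ - ψ (σ + 𝔥 p.2)) else 0 with hCq
  have hsum : ∑ p : V × Vhat, Cq p = 0 := by
    have hzero : ∑ σ : V → ZMod 2, (starRingEnd ℂ) (ψ σ) *
        (∑ p : V × Vhat, if (bipGraph 𝔥).dist (Sum.inr p.1) (Sum.inl p.2) = 3 ∧ σ p.1 = 1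
          then ψ σ - ψ (σ + fun u => 𝔥 p.2 u) else 0) = 0 := by
      simp only [hval, mul_zero, Finset.sum_const_zero]
    calc ∑ p : V × Vhat, Cq p
        = ∑ p : V × Vhat, ∑ σ : V → ZMod 2, (starRingEnd ℂ) (ψ σ) *
            (if (bipGraph 𝔥).dist (Sum.inr p.1) (Sum.inl p.2) = 3 ∧ σ p.1 = 1
              then ψ σ - ψ (σ + fun u => 𝔥 p.2 u) else 0) := by
          refine Finset.sum_congr rfl fun p _ => ?_
          by_cases hp : (bipGraph 𝔥).dist (Sum.inr p.1) (Sum.inl p.2) = 3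
          · simp only [hCq, hp, if_true, true_and]
            rw [Finset.sum_filter]
            refine Finset.sum_congr rfl fun σ _ => ?_
            by_cases hσ : σ p.1 = 1
            · simp [hσ]
            · simp [hσ]
          · simp [hCq, hp]
      _ = ∑ σ : V → ZMod 2, ∑ p : V × Vhat, (starRingEnd ℂ) (ψ σ) *
            (if (bipGraph 𝔥).dist (Sum.inr p.1) (Sum.inl p.2) = 3 ∧ σ p.1 = 1
              then ψ σ - ψ (σ + fun u => 𝔥 p.2 u) else 0) := Finset.sum_comm
      _ = ∑ σ : V → ZMod 2, (starRingEnd ℂ) (ψ σ) *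
            (∑ p : V × Vhat, if (bipGraph 𝔥).dist (Sum.inr p.1) (Sum.inl p.2) = 3 ∧ σ p.1 = 1
              then ψ σ - ψ (σ + fun u => 𝔥 p.2 u) else 0) := by
          refine Finset.sum_congr rfl fun σ _ => ?_
          rw [Finset.mul_sum]
      _ = 0 := hzero
  -- conversion to real nonneg
  set Fr : V × Vhat → ℝ := fun p =>
    if (bipGraph 𝔥).dist (Sum.inr p.1) (Sum.inl p.2) = 3
    then ∑ σ ∈ Finset.univ.filter (fun σ : V → ZMod 2 => σ p.1 = 1),
      Complex.normSq (ψ σ - ψ (σ + 𝔥 p.2)) else 0 with hFr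
  have hCF : ∀ p : V × Vhat, 2 * Cq p = ((Fr p : ℝ) : ℂ) := by
    intro p
    by_cases hp : (bipGraph 𝔥).dist (Sum.inr p.1) (Sum.inl p.2) = 3
    · have hr : (𝔥 p.2) p.1 = 0 := by
        refine zmod2_ne_one fun h1 => ?_
        have : (bipGraph 𝔥).Adj (Sum.inr p.1) (Sum.inl p.2) := h1
        have := SimpleGraph.dist_eq_one_iff_adj.mpr this
        omega
      simp only [hCq, hFr, hp, if_true]
      exact pair_sum_eq ψ hr
    · simp [hCq, hFr, hp]
  have hFr0 : ∑ p : V × Vhat, Fr p = 0 := by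
    have h2 : ((∑ p : V × Vhat, Fr p : ℝ) : ℂ) = 0 := by
      rw [Complex.ofReal_sum]
      calc ∑ p : V × Vhat, ((Fr p : ℝ) : ℂ) = ∑ p : V × Vhat, 2 * Cq p := by
            exact Finset.sum_congr rfl fun p _ => (hCF p).symm
        _ = 2 * ∑ p : V × Vhat, Cq p := by rw [Finset.mul_sum]
        _ = 0 := by rw [hsum, mul_zero]
    exact_mod_cast h2
  have hFrnn : ∀ p : V × Vhat, 0 ≤ Fr p := by
    intro p
    by_cases hp : (bipGraph 𝔥).dist (Sum.inr p.1) (Sum.inl p.2) = 3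
    · simp only [hFr, hp, if_true]
      exact Finset.sum_nonneg fun σ _ => Complex.normSq_nonneg _
    · simp [hFr, hp]
  have hFrz : ∀ p : V × Vhat, Fr p = 0 := by
    intro p
    have := (Finset.sum_eq_zero_iff_of_nonneg (fun p _ => hFrnn p)).mp hFr0
    exact this p (Finset.mem_univ p)
  intro w v σ hd hσv
  have := hFrz (v, w)
  simp only [hFr, hd, if_true] at this
  have hterm := (Finset.sum_eq_zero_iff_of_nonneg
    (fun σ _ => Complex.normSq_nonneg _)).mp this σ (by simp [hσv])
  have := Complex.normSq_eq_zero.mp hterm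
  exact sub_eq_zero.mp this

lemma zmod2_em (x : ZMod 2) : x = 0 ∨ x = 1 := by revert x; decide

lemma sign_add (X Y : ZMod 2) : (if X + Y = 1 then (-1:ℂ) else 1) =
    (if X = 1 then (-1:ℂ) else 1) * (if Y = 1 then (-1:ℂ) else 1) := by
  rcases zmod2_em X with rfl | rfl <;> rcases zmod2_em Y with rfl | rfl
  · rw [if_neg (by decide : ¬((0:ZMod 2) + 0 = 1)), if_neg (by decide : ¬((0:ZMod 2) = 1))]
    norm_num
  · rw [if_pos (by decide : ((0:ZMod 2) + 1 = 1)), if_neg (by decide : ¬((0:ZMod 2) = 1)),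
      if_pos rfl]
    norm_num
  · rw [if_pos (by decide : ((1:ZMod 2) + 0 = 1)), if_pos rfl,
      if_neg (by decide : ¬((0:ZMod 2) = 1))]
    norm_num
  · rw [if_neg (by decide : ¬((1:ZMod 2) + 1 = 1)), if_pos rfl]
    norm_num

lemma sign_flip (X : ZMod 2) : (if X + 1 = 1 then (-1:ℂ) else 1) =
    -(if X = 1 then (-1:ℂ) else 1) := by
  rcases zmod2_em X with rfl | rfl
  · rw [if_pos (by decide : ((0:ZMod 2) + 1 = 1)), if_neg (by decide : ¬((0:ZMod 2) = 1))]
  · rw [if_neg (by decide : ¬((1:ZMod 2) + 1 = 1)), if_pos rfl]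
    norm_num

lemma pi2_add_eq_zero (σ τ : V → ZMod 2) : σ + τ = 0 ↔ σ = τ := by
  constructor
  · intro h
    funext v
    have := congrFun h v
    simp only [Pi.add_apply, Pi.zero_apply] at this
    revert this; generalize σ v = x; generalize τ v = y; revert x y; decide
  · rintro rfl
    funext v
    simp only [Pi.add_apply, Pi.zero_apply]
    have : ∀ x : ZMod 2, x + x = 0 := by decide
    exact this _

lemma char_sum (c : V → ZMod 2) :
    ∑ x : V → ZMod 2, (if (∑ v, c v * x v) = (1 : ZMod 2) then (-1:ℂ) else 1) =
    if c = 0 then (Fintype.card (V → ZMod 2) : ℂ) else 0 := by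
  by_cases hc : c = 0
  · subst hc
    simp [show ((0:ZMod 2)) ≠ 1 by decide, Finset.card_univ]
  · rw [if_neg hc]
    obtain ⟨v₀, hv₀⟩ := Function.ne_iff.mp hc
    have hv₀ : c v₀ = 1 := by
      rcases zmod2_em (c v₀) with h | h
      · exact absurd h (by simpa using hv₀)
      · exact h
    set δ : V → ZMod 2 := fun u => if u = v₀ then 1 else 0 with hδ
    have hδsum : (∑ v, c v * δ v) = 1 := by
      rw [hδ]
      simp [mul_ite, Finset.sum_ite_eq', hv₀]
    have hre : (∑ x : V → ZMod 2, (if (∑ v, c v * x v) = (1 : ZMod 2) then (-1:ℂ) else 1)) =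
        ∑ x : V → ZMod 2,
          (if (∑ v, c v * (x + δ) v) = (1 : ZMod 2) then (-1:ℂ) else 1) :=
      Fintype.sum_equiv (Equiv.addRight δ)
        (fun x => if (∑ v, c v * (x + δ) v) = (1 : ZMod 2) then (-1:ℂ) else 1)
        (fun x => if (∑ v, c v * x v) = (1 : ZMod 2) then (-1:ℂ) else 1)
        (fun x => rfl) |>.symm
    have hpt : ∀ x : V → ZMod 2,
        (if (∑ v, c v * (x + δ) v) = (1 : ZMod 2) then (-1:ℂ) else 1) =
        -(if (∑ v, c v * x v) = (1 : ZMod 2) then (-1:ℂ) else 1) := by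
      intro x
      have hdot : (∑ v, c v * (x + δ) v) = (∑ v, c v * x v) + 1 := by
        simp only [Pi.add_apply, mul_add, Finset.sum_add_distrib, hδsum]
      rw [hdot, sign_flip]
    have key : (∑ x : V → ZMod 2, (if (∑ v, c v * x v) = (1 : ZMod 2) then (-1:ℂ) else 1)) =
        - ∑ x : V → ZMod 2, (if (∑ v, c v * x v) = (1 : ZMod 2) then (-1:ℂ) else 1) := by
      conv_lhs => rw [hre]
      rw [← Finset.sum_neg_distrib]
      exact Finset.sum_congr rfl fun x _ => hpt x
    have h2 : (2:ℂ) * ∑ x : V → ZMod 2,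
        (if (∑ v, c v * x v) = (1 : ZMod 2) then (-1:ℂ) else 1) = 0 := by
      linear_combination key
    rcases mul_eq_zero.mp h2 with h | h
    · norm_num at h
    · exact h

lemma chi_point_orth (σ' σ : V → ZMod 2) :
    ∑ a : V → ZMod 2, chi a σ' * chi a σ =
    if σ' = σ then (Fintype.card (V → ZMod 2) : ℂ) else 0 := by
  have hpt : ∀ a : V → ZMod 2, chi a σ' * chi a σ =
      if (∑ v, (σ' + σ) v * a v) = (1 : ZMod 2) then (-1:ℂ) else 1 := by
    intro a
    show (if (∑ v, a v * σ' v) = (1:ZMod 2) then (-1:ℂ) else 1) *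
        (if (∑ v, a v * σ v) = (1:ZMod 2) then (-1:ℂ) else 1) = _
    rw [← sign_add]
    congr 1
    simp only [Pi.add_apply, add_mul, Finset.sum_add_distrib, eq_iff_iff]
    constructor <;> intro h <;> rw [← h] <;>
      exact congrArg₂ (· + ·) (Finset.sum_congr rfl fun v _ => mul_comm _ _)
        (Finset.sum_congr rfl fun v _ => mul_comm _ _)
  simp_rw [hpt]
  rw [char_sum]
  congr 1
  simp only [eq_iff_iff]
  exact pi2_add_eq_zero σ' σ

lemma chi_shift (a : V → ZMod 2) {w : Vhat} (hw : (∑ v, 𝔥 w v * a v) = (1 : ZMod 2))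
    (σ : V → ZMod 2) : chi a (σ + 𝔥 w) = -(chi a σ) := by
  show (if (∑ v, a v * (σ + 𝔥 w) v) = (1:ZMod 2) then (-1:ℂ) else 1) =
    -(if (∑ v, a v * σ v) = (1:ZMod 2) then (-1:ℂ) else 1)
  have hdot : (∑ v, a v * (σ + 𝔥 w) v) = (∑ v, a v * σ v) + 1 := by
    simp only [Pi.add_apply, mul_add, Finset.sum_add_distrib]
    congr 1
    rw [← hw]
    exact Finset.sum_congr rfl fun v _ => mul_comm _ _
  rw [hdot]
  exact sign_flip _

lemma chi_shift' (a : V → ZMod 2) (ha : 𝔥.mulVec a = 0) (w : Vhat) (σ : V → ZMod 2) :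
    chi a (σ + 𝔥 w) = chi a σ := by
  show (if (∑ v, a v * (σ + 𝔥 w) v) = (1:ZMod 2) then (-1:ℂ) else 1) =
    (if (∑ v, a v * σ v) = (1:ZMod 2) then (-1:ℂ) else 1)
  have hdot : (∑ v, a v * (σ + 𝔥 w) v) = (∑ v, a v * σ v) := by
    simp only [Pi.add_apply, mul_add, Finset.sum_add_distrib]
    have h0 : (∑ v, a v * 𝔥 w v) = 0 := by
      have := congrFun ha w
      simp only [Matrix.mulVec, dotProduct, Pi.zero_apply] at this
      rw [← this]
      exact Finset.sum_congr rfl fun v _ => mul_comm _ _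
    rw [h0, add_zero]
  rw [hdot]

lemma chi_at_zero (a : V → ZMod 2) : chi a 0 = 1 := by
  show (if (∑ v, a v * (0:V → ZMod 2) v) = (1:ZMod 2) then (-1:ℂ) else 1) = 1
  rw [if_neg]
  simp only [Pi.zero_apply, mul_zero, Finset.sum_const_zero]
  decide

lemma inv_mem_span (φ : EuclideanSpace ℂ (V → ZMod 2))
    (hinv : ∀ (σ : V → ZMod 2) (w : Vhat), φ (σ + 𝔥 w) = φ σ) :
    φ ∈ Submodule.span ℂ {ψ : EuclideanSpace ℂ (V → ZMod 2) |
      ∃ a : V → ZMod 2, 𝔥.mulVec a = 0 ∧ ψ = chi a} := by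
  have hN0 : (Fintype.card (V → ZMod 2) : ℂ) ≠ 0 := by
    simp [Fintype.card_ne_zero]
  have hdecomp : φ = ∑ a : V → ZMod 2,
      ((Fintype.card (V → ZMod 2) : ℂ)⁻¹ * ∑ σ' : V → ZMod 2, chi a σ' * φ σ') • chi a := by
    ext σ
    refine Eq.symm ?_
    rw [WithLp.ofLp_sum, Finset.sum_apply]
    calc ∑ a : V → ZMod 2,
          (((Fintype.card (V → ZMod 2) : ℂ)⁻¹ * ∑ σ' : V → ZMod 2, chi a σ' * φ σ') • chi a) σ
        = ∑ a : V → ZMod 2, (Fintype.card (V → ZMod 2) : ℂ)⁻¹ *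
            ∑ σ' : V → ZMod 2, chi a σ' * φ σ' * chi a σ := by
          refine Finset.sum_congr rfl fun a _ => ?_
          simp only [PiLp.smul_apply, smul_eq_mul]
          rw [mul_assoc, Finset.sum_mul]
      _ = (Fintype.card (V → ZMod 2) : ℂ)⁻¹ *
            ∑ σ' : V → ZMod 2, ∑ a : V → ZMod 2, chi a σ' * φ σ' * chi a σ := by
          rw [← Finset.mul_sum, Finset.sum_comm]
      _ = (Fintype.card (V → ZMod 2) : ℂ)⁻¹ *
            ∑ σ' : V → ZMod 2, φ σ' *
              (if σ' = σ then (Fintype.card (V → ZMod 2) : ℂ) else 0) := by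
          congr 1
          refine Finset.sum_congr rfl fun σ' _ => ?_
          rw [← chi_point_orth σ' σ, Finset.mul_sum]
          exact Finset.sum_congr rfl fun a _ => by ring
      _ = φ σ := by
          simp only [mul_ite, mul_zero]
          rw [Finset.sum_ite_eq' Finset.univ σ
            (fun σ' => φ σ' * (Fintype.card (V → ZMod 2) : ℂ))]
          simp only [Finset.mem_univ, if_true]
          field_simp
  rw [hdecomp]
  apply Submodule.sum_mem
  intro a _
  by_cases ha : 𝔥.mulVec a = 0
  · exact Submodule.smul_mem _ _ (Submodule.subset_span ⟨a, ha, rfl⟩)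
  · obtain ⟨w, hw⟩ := Function.ne_iff.mp ha
    have hw1 : (∑ v, 𝔥 w v * a v) = (1 : ZMod 2) := by
      rcases zmod2_em ((𝔥.mulVec a) w) with h | h
      · exact absurd h hw
      · simpa [Matrix.mulVec, dotProduct] using h
    have hS0 : (∑ σ' : V → ZMod 2, chi a σ' * φ σ') = 0 := by
      have hre : (∑ σ' : V → ZMod 2, chi a σ' * φ σ') =
          ∑ σ' : V → ZMod 2, chi a (σ' + 𝔥 w) * φ (σ' + 𝔥 w) :=
        Fintype.sum_equiv (Equiv.addRight (𝔥 w))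
          (fun σ' => chi a (σ' + 𝔥 w) * φ (σ' + 𝔥 w))
          (fun σ' => chi a σ' * φ σ') (fun x => rfl) |>.symm
      have key : (∑ σ' : V → ZMod 2, chi a σ' * φ σ') =
          - ∑ σ' : V → ZMod 2, chi a σ' * φ σ' := by
        conv_lhs => rw [hre]
        rw [← Finset.sum_neg_distrib]
        refine Finset.sum_congr rfl fun σ' _ => ?_
        rw [chi_shift a hw1, hinv]
        ring
      have h2 : (2:ℂ) * ∑ σ' : V → ZMod 2, chi a σ' * φ σ' = 0 := by linear_combination key
      rcases mul_eq_zero.mp h2 with h | h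
      · norm_num at h
      · exact h
    rw [hS0, mul_zero, zero_smul]
    exact Submodule.zero_mem _

lemma chi_orth (a b : V → ZMod 2) :
    ∑ σ : V → ZMod 2, chi a σ * chi b σ =
    if a = b then (Fintype.card (V → ZMod 2) : ℂ) else 0 := by
  have hpt : ∀ σ : V → ZMod 2, chi a σ * chi b σ =
      if (∑ v, (a + b) v * σ v) = (1 : ZMod 2) then (-1:ℂ) else 1 := by
    intro σ
    show (if (∑ v, a v * σ v) = (1:ZMod 2) then (-1:ℂ) else 1) *
        (if (∑ v, b v * σ v) = (1:ZMod 2) then (-1:ℂ) else 1) = _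
    rw [← sign_add]
    congr 1
    simp only [Pi.add_apply, add_mul, Finset.sum_add_distrib, eq_iff_iff]
  simp_rw [hpt]
  rw [char_sum]
  congr 1
  simp only [eq_iff_iff]
  exact pi2_add_eq_zero a b

lemma Hdef_delta0 : Hdef 𝔥 (delta0 : EuclideanSpace ℂ (V → ZMod 2)) = 0 := by
  ext σ
  show (∑ p : V × Vhat, if (bipGraph 𝔥).dist (Sum.inr p.1) (Sum.inl p.2) = 3 ∧ σ p.1 = 1
      then delta0 σ - delta0 (σ + fun v => 𝔥 p.2 v) else 0) = 0
  refine Finset.sum_eq_zero fun p _ => ?_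
  split_ifs with hp
  · obtain ⟨hd, hσ⟩ := hp
    have hσ0 : σ ≠ 0 := by
      intro h
      rw [h] at hσ
      exact absurd hσ (by simp)
    have h2 : σ + (fun v => 𝔥 p.2 v) ≠ 0 := by
      intro h
      have hσw : σ = fun v => 𝔥 p.2 v := (pi2_add_eq_zero _ _).mp h
      have h1 : 𝔥 p.2 p.1 = 1 := by rw [hσw] at hσ; exact hσ
      have : (bipGraph 𝔥).dist (Sum.inr p.1) (Sum.inl p.2) = 1 :=
        SimpleGraph.dist_eq_one_iff_adj.mpr (bip_adj_rl.mpr h1)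
      omega
    show (if σ = 0 then (1:ℂ) else 0) - (if σ + (fun v => 𝔥 p.2 v) = 0 then (1:ℂ) else 0) = 0
    rw [if_neg hσ0, if_neg h2, sub_zero]
  · rfl

lemma Hdef_chi (a : V → ZMod 2) (ha : 𝔥.mulVec a = 0) :
    Hdef 𝔥 (chi a : EuclideanSpace ℂ (V → ZMod 2)) = 0 := by
  ext σ
  show (∑ p : V × Vhat, if (bipGraph 𝔥).dist (Sum.inr p.1) (Sum.inl p.2) = 3 ∧ σ p.1 = 1
      then chi a σ - chi a (σ + fun v => 𝔥 p.2 v) else 0) = 0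
  refine Finset.sum_eq_zero fun p _ => ?_
  split_ifs with hp
  · have : chi a (σ + fun v => 𝔥 p.2 v) = chi a σ := chi_shift' a ha p.2 σ
    rw [this, sub_self]
  · rfl

end AuxLemmas

/-- under the stated assumptions on the Tanner graph, the kernel of the deformed
Hamiltonian `H'` is exactly the span of `δ₀` together with the characters `χ_a`, `a ∈ ker 𝔥`;
in particular its dimension is `|ker 𝔥| + 1`. -/
theorem kernel_of_deformed_hamiltonian
    [Nonempty Vhat] [Nonempty V]
    (𝔥 : Matrix Vhat V (ZMod 2)) (D Dhat : ℕ) (hD : 1 ≤ D) (hDhat : 1 ≤ Dhat)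
    (hconn : (bipGraph 𝔥).Connected)
    (hdegV : ∀ v : V, (Finset.univ.filter fun w : Vhat => 𝔥 w v = 1).card ≤ D)
    (hdegVhat : ∀ w : Vhat, (Finset.univ.filter fun v : V => 𝔥 w v = 1).card ≤ Dhat)
    (hcard : 2 * D * Dhat < Fintype.card V) :
    LinearMap.ker (Hdef 𝔥) =
      Submodule.span ℂ ({delta0} ∪ {ψ | ∃ a : V → ZMod 2, 𝔥.mulVec a = 0 ∧ ψ = chi a}) ∧
    Module.finrank ℂ (LinearMap.ker (Hdef 𝔥)) =
      Nat.card {a : V → ZMod 2 // 𝔥.mulVec a = 0} + 1 := by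
  -- an edge exists
  have hedge : ∃ (w : Vhat) (v : V), 𝔥 w v = 1 := by
    obtain ⟨v0e⟩ := ‹Nonempty V›
    obtain ⟨w0e⟩ := ‹Nonempty Vhat›
    have hne : (bipGraph 𝔥).dist (Sum.inr v0e) (Sum.inl w0e) ≠ 0 := by
      intro h0
      exact absurd ((hconn.dist_eq_zero_iff).mp h0) (by simp)
    obtain ⟨k, hk⟩ := Nat.exists_eq_succ_of_ne_zero hne
    obtain ⟨z, hz, _⟩ := exists_adj_dist hconn hk
    obtain ⟨w, rfl, h⟩ := bip_adj_inr hz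
    exact ⟨w, v0e, h⟩
  obtain ⟨w₀, v₀e, h𝔥e⟩ := hedge
  have hr₀ : (𝔥 w₀ : V → ZMod 2) ≠ 0 := by
    intro h
    have h2 := congrFun h v₀e
    simp only [Pi.zero_apply] at h2
    rw [h𝔥e] at h2
    exact absurd h2 (by decide)
  have hker_eq : LinearMap.ker (Hdef 𝔥) =
      Submodule.span ℂ ({delta0} ∪
        {ψ | ∃ a : V → ZMod 2, 𝔥.mulVec a = 0 ∧ ψ = chi a}) := by
    apply le_antisymm
    · intro ψ hψmem
      have hψ : Hdef 𝔥 ψ = 0 := LinearMap.mem_ker.mp hψmem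
      have Hcon := ker_constraints hconn ψ hψ
      have E : ∀ (σ : V → ZMod 2) (w : Vhat), σ ≠ 0 → σ + 𝔥 w ≠ 0 → ψ σ = ψ (σ + 𝔥 w) :=
        fun σ w h1 h2 => mainInv hconn hD hDhat hdegV hdegVhat hcard ψ Hcon σ w h1 h2
      have hval_shared : ∀ w : Vhat, (𝔥 w : V → ZMod 2) ≠ 0 → ψ (𝔥 w) = ψ (𝔥 w₀) := by
        intro w hw
        by_cases hww : (𝔥 w : V → ZMod 2) = 𝔥 w₀
        · rw [hww]
        · have hne1 : (𝔥 w : V → ZMod 2) + 𝔥 w₀ ≠ 0 :=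
            fun h => hww ((pi2_add_eq_zero _ _).mp h)
          have e1 : ψ (𝔥 w) = ψ (𝔥 w + 𝔥 w₀) := E (𝔥 w) w₀ hw hne1
          have hne2 : (𝔥 w₀ : V → ZMod 2) + 𝔥 w ≠ 0 :=
            fun h => hww ((pi2_add_eq_zero _ _).mp h).symm
          have e2 : ψ (𝔥 w₀) = ψ (𝔥 w₀ + 𝔥 w) := E (𝔥 w₀) w hr₀ hne2
          rw [e1, e2, add_comm]
      set c : ℂ := ψ 0 - ψ (𝔥 w₀) with hc
      set φ : EuclideanSpace ℂ (V → ZMod 2) := ψ - c • delta0 with hφ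
      have happ : ∀ τ : V → ZMod 2, φ τ = ψ τ - c * (if τ = 0 then 1 else 0) := by
        intro τ
        rw [hφ]
        simp only [PiLp.sub_apply, PiLp.smul_apply, smul_eq_mul]
        rfl
      have hinv : ∀ (σ : V → ZMod 2) (w : Vhat), φ (σ + 𝔥 w) = φ σ := by
        intro σ w
        by_cases hw0 : (𝔥 w : V → ZMod 2) = 0
        · rw [hw0, add_zero]
        by_cases hσ0 : σ = 0
        · subst hσ0
          rw [zero_add, happ, happ, if_neg hw0, if_pos rfl, hval_shared w hw0, hc]
          ring
        by_cases hτ0 : σ + 𝔥 w = 0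
        · have hσw : σ = 𝔥 w := (pi2_add_eq_zero _ _).mp hτ0
          rw [hτ0, happ, happ, if_pos rfl, if_neg hσ0, hσw, hval_shared w hw0, hc]
          ring
        · rw [happ, happ, if_neg hτ0, if_neg hσ0, ← E σ w hσ0 hτ0]
      have hφmem := inv_mem_span φ hinv
      have hψeq : ψ = φ + c • delta0 := by rw [hφ]; abel
      rw [hψeq]
      refine Submodule.add_mem _ ?_ ?_
      · exact Submodule.span_mono Set.subset_union_right hφmem
      · exact Submodule.smul_mem _ _
          (Submodule.subset_span (Set.mem_union_left _ rfl))
    · rw [Submodule.span_le]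
      rintro x (hx | ⟨a, ha, rfl⟩)
      · rw [Set.mem_singleton_iff] at hx
        subst hx
        exact SetLike.mem_coe.mpr (LinearMap.mem_ker.mpr Hdef_delta0)
      · exact SetLike.mem_coe.mpr (LinearMap.mem_ker.mpr (Hdef_chi a ha))
  refine ⟨hker_eq, ?_⟩
  set f : Option {a : V → ZMod 2 // 𝔥.mulVec a = 0} → EuclideanSpace ℂ (V → ZMod 2) :=
    fun o => Option.elim o delta0 (fun a => chi a.1) with hf
  have hrange : ({delta0} ∪ {ψ | ∃ a : V → ZMod 2, 𝔥.mulVec a = 0 ∧ ψ = chi a} :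
      Set (EuclideanSpace ℂ (V → ZMod 2))) = Set.range f := by
    ext x
    simp only [Set.mem_union, Set.mem_singleton_iff, Set.mem_setOf_eq, Set.mem_range]
    constructor
    · rintro (rfl | ⟨a, ha, rfl⟩)
      · exact ⟨none, rfl⟩
      · exact ⟨some ⟨a, ha⟩, rfl⟩
    · rintro ⟨o, rfl⟩
      cases o with
      | none => exact Or.inl rfl
      | some a => exact Or.inr ⟨a.1, a.2, rfl⟩
  have hN0 : (Fintype.card (V → ZMod 2) : ℂ) ≠ 0 := by
    simp [Fintype.card_ne_zero]
  have hli : LinearIndependent ℂ f := by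
    rw [Fintype.linearIndependent_iff]
    intro g hg
    have hpt : ∀ τ : V → ZMod 2, (∑ o, g o • f o) τ = 0 := fun τ => by rw [hg]; rfl
    have happ : ∀ τ : V → ZMod 2,
        (g none) * (if τ = 0 then 1 else 0) +
          ∑ b : {a : V → ZMod 2 // 𝔥.mulVec a = 0}, g (some b) * chi b.1 τ = 0 := by
      intro τ
      have h1 := hpt τ
      rw [WithLp.ofLp_sum, Finset.sum_apply] at h1
      rw [Fintype.sum_option (fun o => (g o • f o) τ)] at h1
      simp only [hf, Option.elim, PiLp.smul_apply, smul_eq_mul] at h1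
      exact h1
    have hchi1 : ∀ b : {a : V → ZMod 2 // 𝔥.mulVec a = 0}, chi b.1 (𝔥 w₀) = 1 := by
      intro b
      have h := chi_shift' b.1 b.2 w₀ 0
      rw [zero_add] at h
      rw [h, chi_at_zero]
    have hii : ∑ b : {a : V → ZMod 2 // 𝔥.mulVec a = 0}, g (some b) = 0 := by
      have h1 := happ (𝔥 w₀)
      rw [if_neg hr₀, mul_zero, zero_add] at h1
      rw [← h1]
      exact Finset.sum_congr rfl fun b _ => by rw [hchi1 b, mul_one]
    have hi : ∀ b : {a : V → ZMod 2 // 𝔥.mulVec a = 0},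
        g none + g (some b) * (Fintype.card (V → ZMod 2) : ℂ) = 0 := by
      intro b
      have hsum : ∑ τ : V → ZMod 2, chi b.1 τ *
          ((g none) * (if τ = 0 then 1 else 0) +
            ∑ b' : {a : V → ZMod 2 // 𝔥.mulVec a = 0}, g (some b') * chi b'.1 τ) = 0 :=
        Finset.sum_eq_zero fun τ _ => by rw [happ τ, mul_zero]
      have hexp1 : ∑ τ : V → ZMod 2, chi b.1 τ * ((g none) * (if τ = 0 then 1 else 0)) =
          g none := by
        have : ∀ τ : V → ZMod 2, chi b.1 τ * ((g none) * (if τ = 0 then 1 else 0)) =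
            if τ = 0 then chi b.1 τ * g none else 0 := by
          intro τ
          by_cases h : τ = 0 <;> simp [h]
        simp_rw [this]
        rw [Finset.sum_ite_eq' Finset.univ 0 (fun τ => chi b.1 τ * g none)]
        simp [chi_at_zero]
      have hexp2 : ∑ τ : V → ZMod 2, chi b.1 τ *
          (∑ b' : {a : V → ZMod 2 // 𝔥.mulVec a = 0}, g (some b') * chi b'.1 τ) =
          g (some b) * (Fintype.card (V → ZMod 2) : ℂ) := by
        calc ∑ τ : V → ZMod 2, chi b.1 τ *
            (∑ b' : {a : V → ZMod 2 // 𝔥.mulVec a = 0}, g (some b') * chi b'.1 τ)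
            = ∑ τ : V → ZMod 2, ∑ b' : {a : V → ZMod 2 // 𝔥.mulVec a = 0},
                g (some b') * (chi b.1 τ * chi b'.1 τ) := by
              refine Finset.sum_congr rfl fun τ _ => ?_
              rw [Finset.mul_sum]
              exact Finset.sum_congr rfl fun b' _ => by ring
          _ = ∑ b' : {a : V → ZMod 2 // 𝔥.mulVec a = 0},
                g (some b') * ∑ τ : V → ZMod 2, chi b.1 τ * chi b'.1 τ := by
              rw [Finset.sum_comm]
              exact Finset.sum_congr rfl fun b' _ => by rw [Finset.mul_sum]
          _ = ∑ b' : {a : V → ZMod 2 // 𝔥.mulVec a = 0},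
                g (some b') * (if b' = b then (Fintype.card (V → ZMod 2) : ℂ) else 0) := by
              refine Finset.sum_congr rfl fun b' _ => ?_
              rw [chi_orth]
              by_cases h : b' = b
              · subst h; rw [if_pos rfl, if_pos rfl]
              · rw [if_neg (fun hh => h (Subtype.ext hh.symm)), if_neg h]
          _ = g (some b) * (Fintype.card (V → ZMod 2) : ℂ) := by
              simp only [mul_ite, mul_zero]
              rw [Finset.sum_ite_eq' Finset.univ b
                (fun b' => g (some b') * (Fintype.card (V → ZMod 2) : ℂ))]
              simp
      have hkey : ∑ τ : V → ZMod 2, chi b.1 τ *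
          ((g none) * (if τ = 0 then 1 else 0) +
            ∑ b' : {a : V → ZMod 2 // 𝔥.mulVec a = 0}, g (some b') * chi b'.1 τ) =
          g none + g (some b) * (Fintype.card (V → ZMod 2) : ℂ) := by
        calc ∑ τ : V → ZMod 2, chi b.1 τ *
            ((g none) * (if τ = 0 then 1 else 0) +
              ∑ b' : {a : V → ZMod 2 // 𝔥.mulVec a = 0}, g (some b') * chi b'.1 τ)
            = ∑ τ : V → ZMod 2, (chi b.1 τ * ((g none) * (if τ = 0 then 1 else 0)) +
                chi b.1 τ * ∑ b' : {a : V → ZMod 2 // 𝔥.mulVec a = 0},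
                  g (some b') * chi b'.1 τ) :=
              Finset.sum_congr rfl fun τ _ => mul_add _ _ _
          _ = (∑ τ : V → ZMod 2, chi b.1 τ * ((g none) * (if τ = 0 then 1 else 0))) +
              ∑ τ : V → ZMod 2, chi b.1 τ *
                ∑ b' : {a : V → ZMod 2 // 𝔥.mulVec a = 0}, g (some b') * chi b'.1 τ :=
              Finset.sum_add_distrib
          _ = g none + g (some b) * (Fintype.card (V → ZMod 2) : ℂ) := by
              rw [hexp1, hexp2]
      rw [hsum] at hkey
      exact hkey.symm
    have hK0 : Fintype.card {a : V → ZMod 2 // 𝔥.mulVec a = 0} ≠ 0 := by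
      have : Nonempty {a : V → ZMod 2 // 𝔥.mulVec a = 0} := ⟨⟨0, Matrix.mulVec_zero 𝔥⟩⟩
      exact Fintype.card_ne_zero
    have hnone : g none = 0 := by
      have hsum : ∑ b : {a : V → ZMod 2 // 𝔥.mulVec a = 0},
          (g none + g (some b) * (Fintype.card (V → ZMod 2) : ℂ)) = 0 :=
        Finset.sum_eq_zero fun b _ => hi b
      rw [Finset.sum_add_distrib, Finset.sum_const, ← Finset.sum_mul, hii, zero_mul,
        add_zero, Finset.card_univ, nsmul_eq_mul] at hsum
      rcases mul_eq_zero.mp hsum with h | h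
      · exact absurd (Nat.cast_eq_zero.mp h) hK0
      · exact h
    intro o
    cases o with
    | none => exact hnone
    | some b =>
      have h1 := hi b
      rw [hnone, zero_add] at h1
      exact (mul_eq_zero.mp h1).resolve_right hN0
  rw [hker_eq, hrange, finrank_span_eq_card hli]
  rw [Fintype.card_option, Nat.card_eq_fintype_card]


end
end

section
/- Let ψ : (V → ZMod 2) → ℂ satisfy the local flip constraints: for every v ∈ V and v̂ ∈ V̂ with d(v, v̂) = 3 and every σ : V → ZMod 2 with σ v = 1, one has ψ(σ) = ψ(σ + r_{v̂}). Then for any two configurations σ, σ' : V → ZMod 2 with σ ≠ 0 and σ' ≠ 0 such that σ' − σ lies in the row space of 𝔥 (i.e. there exists x : V̂ → ZMod 2 with σ' = σ + 𝔥ᵀ.mulVec x), one has ψ(σ') = ψ(σ). -/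
open scoped Classical

section

namespace BipAux

open SimpleGraph Finset

variable {Vhat V : Type*} [Fintype Vhat] [Fintype V] [DecidableEq Vhat] [DecidableEq V]
  [Nonempty Vhat] [Nonempty V] {𝔥 : Matrix Vhat V (ZMod 2)}

def side : Vhat ⊕ V → ZMod 2 := Sum.elim (fun _ => 0) (fun _ => 1)

lemma zm : ∀ a : ZMod 2, a = 0 ∨ a = 1 := by decide

lemma adj_iff {w : Vhat} {v : V} : (bipGraph 𝔥).Adj (Sum.inl w) (Sum.inr v) ↔ 𝔥 w v = 1 :=
  Iff.rfl

lemma adj_iff' {w : Vhat} {v : V} : (bipGraph 𝔥).Adj (Sum.inr v) (Sum.inl w) ↔ 𝔥 w v = 1 :=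
  Iff.rfl

lemma adj_side {x y : Vhat ⊕ V} (h : (bipGraph 𝔥).Adj x y) : side x + side y = 1 := by
  cases x <;> cases y <;> first
    | exact (h : False).elim
    | simp [side]

lemma walk_parity {x y : Vhat ⊕ V} (p : (bipGraph 𝔥).Walk x y) :
    (p.length : ZMod 2) = side x + side y := by
  induction p with
  | nil => simp [CharTwo.add_self_eq_zero]
  | cons h q ih =>
    rw [SimpleGraph.Walk.length_cons]
    push_cast
    rw [ih]
    have key : ∀ a b c : ZMod 2, a + b = 1 → b + c + 1 = a + c := by decide
    exact key _ _ _ (adj_side h)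

set_option linter.unusedSectionVars false

lemma odd_of_cast_one {m : ℕ} (h : (m : ZMod 2) = 1) : m % 2 = 1 := by
  have h2 : ((m % 2 : ℕ) : ZMod 2) = 1 := by rw [ZMod.natCast_mod m 2]; exact h
  have h3 : m % 2 < 2 := Nat.mod_lt _ (by norm_num)
  interval_cases h4 : m % 2
  · exact absurd h2 (by decide)
  · rfl

lemma even_of_cast_zero {m : ℕ} (h : (m : ZMod 2) = 0) : m % 2 = 0 := by
  have h2 : ((m % 2 : ℕ) : ZMod 2) = 0 := by rw [ZMod.natCast_mod m 2]; exact h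
  have h3 : m % 2 < 2 := Nat.mod_lt _ (by norm_num)
  interval_cases h4 : m % 2
  · rfl
  · exact absurd h2 (by decide)

variable (hconn : (bipGraph 𝔥).Connected)
include hconn

lemma dist_parity (x y : Vhat ⊕ V) :
    (((bipGraph 𝔥).dist x y : ℕ) : ZMod 2) = side x + side y := by
  obtain ⟨p, hp⟩ := hconn.exists_walk_length_eq_dist x y
  rw [← hp]; exact walk_parity p

lemma dist_vw_odd (v : V) (w : Vhat) :
    (bipGraph 𝔥).dist (Sum.inr v) (Sum.inl w) % 2 = 1 := by
  apply odd_of_cast_one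
  rw [dist_parity hconn]
  simp [side]

lemma dist_vv_even (v v' : V) :
    (bipGraph 𝔥).dist (Sum.inr v) (Sum.inr v') % 2 = 0 := by
  apply even_of_cast_zero
  rw [dist_parity hconn]
  simp [side, CharTwo.add_self_eq_zero]

omit hconn in
lemma entry_one_iff_dist_one {v : V} {w : Vhat} :
    𝔥 w v = 1 ↔ (bipGraph 𝔥).dist (Sum.inr v) (Sum.inl w) = 1 := by
  rw [SimpleGraph.dist_eq_one_iff_adj, adj_iff']

omit hconn in
lemma entry_zero_of_dist_ne_one {v : V} {w : Vhat}
    (h : (bipGraph 𝔥).dist (Sum.inr v) (Sum.inl w) ≠ 1) : 𝔥 w v = 0 := by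
  rcases zm (𝔥 w v) with h0 | h1
  · exact h0
  · exact absurd (entry_one_iff_dist_one.mp h1) h

lemma three_le_dist_of_entry_zero {v : V} {w : Vhat} (h : 𝔥 w v = 0) :
    3 ≤ (bipGraph 𝔥).dist (Sum.inr v) (Sum.inl w) := by
  have hodd := dist_vw_odd hconn v w
  have h1 : (bipGraph 𝔥).dist (Sum.inr v) (Sum.inl w) ≠ 1 := by
    intro h1
    rw [← entry_one_iff_dist_one] at h1
    rw [h1] at h
    exact one_ne_zero h
  omega

omit hconn in
lemma getVert_nil' (z : Vhat ⊕ V) (i : ℕ) :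
    (SimpleGraph.Walk.nil : (bipGraph 𝔥).Walk z z).getVert i = z := rfl

lemma dist_getVert_le {x y : Vhat ⊕ V} (p : (bipGraph 𝔥).Walk x y) (i : ℕ) :
    (bipGraph 𝔥).dist x (p.getVert i) ≤ i := by
  induction p generalizing i with
  | nil =>
    rw [getVert_nil', SimpleGraph.dist_self]
    exact Nat.zero_le i
  | @cons a b c h q ih =>
    cases i with
    | zero =>
      rw [SimpleGraph.Walk.getVert_zero, SimpleGraph.dist_self]
    | succ i =>
      rw [SimpleGraph.Walk.getVert_cons_succ]
      have tri : (bipGraph 𝔥).dist a (q.getVert i) ≤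
          (bipGraph 𝔥).dist a b + (bipGraph 𝔥).dist b (q.getVert i) := hconn.dist_triangle
      have hb : (bipGraph 𝔥).dist a b = 1 := (SimpleGraph.dist_eq_one_iff_adj).mpr h
      have := ih i
      omega

lemma dist_getVert_right_le {x y : Vhat ⊕ V} (p : (bipGraph 𝔥).Walk x y) (i : ℕ) :
    (bipGraph 𝔥).dist (p.getVert i) y ≤ p.length - i := by
  induction p generalizing i with
  | nil =>
    rw [getVert_nil', SimpleGraph.dist_self]
    exact Nat.zero_le _
  | @cons a b c h q ih =>
    cases i with
    | zero =>
      rw [SimpleGraph.Walk.getVert_zero]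
      have := SimpleGraph.dist_le (SimpleGraph.Walk.cons h q)
      simpa using this
    | succ i =>
      rw [SimpleGraph.Walk.getVert_cons_succ]
      have := ih i
      have hl : (SimpleGraph.Walk.cons h q).length = q.length + 1 :=
        SimpleGraph.Walk.length_cons h q
      omega

lemma geodesic_dists {x y : Vhat ⊕ V} (p : (bipGraph 𝔥).Walk x y)
    (hp : p.length = (bipGraph 𝔥).dist x y) (i : ℕ) (hi : i ≤ p.length) :
    (bipGraph 𝔥).dist x (p.getVert i) = i ∧
      (bipGraph 𝔥).dist (p.getVert i) y = p.length - i := by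
  have h1 := dist_getVert_le hconn p i
  have h2 := dist_getVert_right_le hconn p i
  have h3 : (bipGraph 𝔥).dist x y ≤ (bipGraph 𝔥).dist x (p.getVert i) +
      (bipGraph 𝔥).dist (p.getVert i) y := hconn.dist_triangle
  omega

omit hconn in
lemma row_cancel (σ r : V → ZMod 2) : σ + r + r = σ := by
  funext u
  simp only [Pi.add_apply]
  have : ∀ a b : ZMod 2, a + b + b = a := by decide
  exact this _ _

/-- one allowed flip -/
def Flip (𝔥 : Matrix Vhat V (ZMod 2)) (σ τ : V → ZMod 2) : Prop :=
  ∃ (v : V) (w : Vhat), (bipGraph 𝔥).dist (Sum.inr v) (Sum.inl w) = 3 ∧ σ v = 1 ∧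
    τ = σ + fun u => 𝔥 w u

def Rel (𝔥 : Matrix Vhat V (ZMod 2)) : (V → ZMod 2) → (V → ZMod 2) → Prop :=
  Relation.ReflTransGen (Flip 𝔥)

omit hconn in
lemma flip_symm : Symmetric (Flip 𝔥) := by
  rintro σ τ ⟨v, w, hd, hv, rfl⟩
  refine ⟨v, w, hd, ?_, ?_⟩
  · have h0 : 𝔥 w v = 0 := entry_zero_of_dist_ne_one (by rw [hd]; norm_num)
    simp [Pi.add_apply, hv, h0]
  · rw [row_cancel]

omit hconn in
lemma rel_symm {σ τ : V → ZMod 2} (h : Rel 𝔥 σ τ) : Rel 𝔥 τ σ :=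
  haveI : Std.Symm (Flip 𝔥) := ⟨flip_symm⟩
  (Relation.ReflTransGen.symmetric : Std.Symm (Relation.ReflTransGen (Flip 𝔥))).symm _ _ h

omit hconn in
lemma rel_psi (ψ : (V → ZMod 2) → ℂ)
    (hflip : ∀ (v : V) (w : Vhat) (σ : V → ZMod 2),
      (bipGraph 𝔥).dist (Sum.inr v) (Sum.inl w) = 3 → σ v = 1 →
        ψ σ = ψ (σ + fun u => 𝔥 w u))
    {σ τ : V → ZMod 2} (h : Rel 𝔥 σ τ) : ψ σ = ψ τ := by
  induction h with
  | refl => rfl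
  | tail hab hbc ih =>
    obtain ⟨v, w, hd, hv, rfl⟩ := hbc
    rw [ih]
    exact hflip v w _ hd hv

/-- Transport lemma: if `σ` has a `1` at distance `≥ 3` from `wh`, then the row `r_wh`
can be added through allowed flips. -/
lemma main' : ∀ m : ℕ, ∀ (σ : V → ZMod 2) (u : V) (w : Vhat),
    σ u = 1 → (bipGraph 𝔥).dist (Sum.inr u) (Sum.inl w) = m → 3 ≤ m →
    Rel 𝔥 σ (σ + fun t => 𝔥 w t) := by
  intro m
  induction m using Nat.strong_induction_on with
  | _ m ih =>
  intro σ u w hu hdist hm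
  rcases eq_or_lt_of_le hm with h3 | h4
  · exact Relation.ReflTransGen.single ⟨u, w, by rw [hdist, ← h3], hu, rfl⟩
  -- m ≥ 5 by parity
  have hodd : m % 2 = 1 := by rw [← hdist]; exact dist_vw_odd hconn u w
  have hm5 : 5 ≤ m := by omega
  -- geodesic from (inl w) to (inr u)
  have hdist' : (bipGraph 𝔥).dist (Sum.inl w) (Sum.inr u) = m := by
    rw [SimpleGraph.dist_comm]; exact hdist
  obtain ⟨p, hp⟩ := hconn.exists_walk_length_eq_dist (Sum.inl w) (Sum.inr u)
  rw [hdist'] at hp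
  have hg3 := geodesic_dists hconn p (by rw [hp, hdist']) (m - 3) (by omega)
  have hg2 := geodesic_dists hconn p (by rw [hp, hdist']) (m - 2) (by omega)
  -- the vertex at distance m-3 from w is a hat vertex
  have hside3 : side (p.getVert (m - 3)) = 0 := by
    have := dist_parity hconn (Sum.inl w) (p.getVert (m - 3))
    rw [hg3.1] at this
    have hc : ((m - 3 : ℕ) : ZMod 2) = 0 := by
      have : ((m - 3 : ℕ) % 2 : ℕ) = 0 := by omega
      rw [← ZMod.natCast_mod, this]; rfl
    rw [hc] at this
    have hkey : ∀ a : ZMod 2, (0 : ZMod 2) = 0 + a → a = 0 := by decide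
    exact hkey _ (by simpa [side] using this)
  have hside2 : side (p.getVert (m - 2)) = 1 := by
    have := dist_parity hconn (Sum.inl w) (p.getVert (m - 2))
    rw [hg2.1] at this
    have hc : ((m - 2 : ℕ) : ZMod 2) = 1 := by
      have h2 : ((m - 2 : ℕ) % 2 : ℕ) = 1 := by omega
      rw [← ZMod.natCast_mod, h2]; rfl
    rw [hc] at this
    have hkey : ∀ a : ZMod 2, (1 : ZMod 2) = 0 + a → a = 1 := by decide
    exact hkey _ (by simpa [side] using this)
  obtain ⟨w', hw'⟩ : ∃ w', p.getVert (m - 3) = Sum.inl w' := by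
    rcases hh : p.getVert (m - 3) with w' | v'
    · exact ⟨w', rfl⟩
    · rw [hh] at hside3; exact absurd hside3 (by simp [side])
  obtain ⟨t, ht⟩ : ∃ t, p.getVert (m - 2) = Sum.inr t := by
    rcases hh : p.getVert (m - 2) with w'' | t
    · rw [hh] at hside2; exact absurd hside2 (by simp [side])
    · exact ⟨t, rfl⟩
  -- adjacency between them
  have hadj : (bipGraph 𝔥).Adj (p.getVert (m - 3)) (p.getVert (m - 2)) := by
    have h32 : m - 3 + 1 = m - 2 := by omega
    have := p.adj_getVert_succ (i := m - 3) (by omega)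
    rwa [h32] at this
  rw [hw', ht] at hadj
  have hentry : 𝔥 w' t = 1 := hadj
  -- distances
  have hduw' : (bipGraph 𝔥).dist (Sum.inr u) (Sum.inl w') = 3 := by
    have h2 := hg3.2
    rw [hw', hp] at h2
    rw [SimpleGraph.dist_comm, h2]
    omega
  have hdtw : (bipGraph 𝔥).dist (Sum.inr t) (Sum.inl w) = m - 2 := by
    rw [SimpleGraph.dist_comm, ← ht, hg2.1]
  -- entries vanish at distance ≠ 1
  have hw'u : 𝔥 w' u = 0 := entry_zero_of_dist_ne_one (by rw [hduw']; norm_num)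
  have hwu : 𝔥 w u = 0 := entry_zero_of_dist_ne_one (by rw [hdist]; omega)
  rcases zm (σ t) with hσt | hσt
  · -- flip w' first
    set σ1 : V → ZMod 2 := σ + fun s => 𝔥 w' s with hσ1
    have hstep1 : Flip 𝔥 σ σ1 := ⟨u, w', hduw', hu, rfl⟩
    have hσ1t : σ1 t = 1 := by simp [hσ1, Pi.add_apply, hσt, hentry]
    have hmid : Rel 𝔥 σ1 (σ1 + fun s => 𝔥 w s) :=
      ih (m - 2) (by omega) σ1 t w hσ1t hdtw (by omega)
    have hstep3 : Flip 𝔥 (σ1 + fun s => 𝔥 w s) (σ + fun s => 𝔥 w s) := by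
      refine ⟨u, w', hduw', ?_, ?_⟩
      · simp [hσ1, Pi.add_apply, hu, hw'u, hwu]
      · funext s
        simp only [hσ1, Pi.add_apply]
        have : ∀ a b c : ZMod 2, a + c = a + b + c + b := by decide
        exact this _ _ _
    exact (Relation.ReflTransGen.single hstep1).trans
      (hmid.trans (Relation.ReflTransGen.single hstep3))
  · -- σ t = 1 already: direct induction
    exact ih (m - 2) (by omega) σ t w hσt hdtw (by omega)

lemma exists_nbr (v : V) : ∃ w : Vhat, 𝔥 w v = 1 := by
  obtain ⟨w0⟩ := ‹Nonempty Vhat›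
  obtain ⟨p⟩ := hconn (Sum.inr v) (Sum.inl w0)
  cases p with
  | cons h q =>
    rename_i b
    rcases b with w | v2
    · exact ⟨w, h⟩
    · exact (h : False).elim

lemma exists_common {u v : V} (hne : u ≠ v)
    (hd : (bipGraph 𝔥).dist (Sum.inr u) (Sum.inr v) ≤ 2) :
    ∃ w, 𝔥 w u = 1 ∧ 𝔥 w v = 1 := by
  have heven := dist_vv_even hconn u v
  have hne0 : (bipGraph 𝔥).dist (Sum.inr u) (Sum.inr v) ≠ 0 :=
    fun h => hne (Sum.inr_injective (hconn.dist_eq_zero_iff.mp h))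
  have h2 : (bipGraph 𝔥).dist (Sum.inr u) (Sum.inr v) = 2 := by omega
  obtain ⟨p, hp⟩ := hconn.exists_walk_length_eq_dist (Sum.inr u) (Sum.inr v)
  rw [h2] at hp
  cases p with
  | nil => simp at hp
  | cons h q =>
    cases q with
    | nil => simp at hp
    | cons h2 q2 =>
      have hq2 : q2.length = 0 := by
        simp only [SimpleGraph.Walk.length_cons] at hp
        omega
      have heq := SimpleGraph.Walk.eq_of_length_eq_zero hq2
      subst heq
      rename_i b
      rcases b with w | v2
      · exact ⟨w, h, h2⟩
      · exact (h : False).elim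

lemma ball_card (D Dhat : ℕ)
    (hdegV : ∀ v : V, (Finset.univ.filter fun w : Vhat => 𝔥 w v = 1).card ≤ D)
    (hdegVhat : ∀ w : Vhat, (Finset.univ.filter fun v : V => 𝔥 w v = 1).card ≤ Dhat)
    (v : V) :
    (Finset.univ.filter fun u : V =>
      (bipGraph 𝔥).dist (Sum.inr u) (Sum.inr v) ≤ 2).card ≤ D * Dhat := by
  have hsub : (Finset.univ.filter fun u : V =>
      (bipGraph 𝔥).dist (Sum.inr u) (Sum.inr v) ≤ 2) ⊆
      (Finset.univ.filter fun w : Vhat => 𝔥 w v = 1).biUnion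
        (fun w => Finset.univ.filter fun u : V => 𝔥 w u = 1) := by
    intro u hu
    simp only [mem_filter, mem_univ, true_and] at hu
    simp only [mem_biUnion, mem_filter, mem_univ, true_and]
    by_cases hne : u = v
    · subst hne
      obtain ⟨w, hw⟩ := exists_nbr hconn u
      exact ⟨w, hw, hw⟩
    · obtain ⟨w, h1, h2⟩ := exists_common hconn hne hu
      exact ⟨w, h2, h1⟩
  calc (Finset.univ.filter fun u : V =>
      (bipGraph 𝔥).dist (Sum.inr u) (Sum.inr v) ≤ 2).card
      ≤ _ := Finset.card_le_card hsub
    _ ≤ ∑ w ∈ (Finset.univ.filter fun w : Vhat => 𝔥 w v = 1),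
          (Finset.univ.filter fun u : V => 𝔥 w u = 1).card := Finset.card_biUnion_le
    _ ≤ ∑ _w ∈ (Finset.univ.filter fun w : Vhat => 𝔥 w v = 1), Dhat :=
          Finset.sum_le_sum (fun w _ => hdegVhat w)
    _ = (Finset.univ.filter fun w : Vhat => 𝔥 w v = 1).card * Dhat := by
          rw [Finset.sum_const, smul_eq_mul]
    _ ≤ D * Dhat := Nat.mul_le_mul_right _ (hdegV v)

lemma exists_far (D Dhat : ℕ)
    (hdegV : ∀ v : V, (Finset.univ.filter fun w : Vhat => 𝔥 w v = 1).card ≤ D)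
    (hdegVhat : ∀ w : Vhat, (Finset.univ.filter fun v : V => 𝔥 w v = 1).card ≤ Dhat)
    (hcard : 2 * D * Dhat < Fintype.card V) (v v' : V) :
    ∃ z : V, 4 ≤ (bipGraph 𝔥).dist (Sum.inr v) (Sum.inr z) ∧
      4 ≤ (bipGraph 𝔥).dist (Sum.inr v') (Sum.inr z) := by
  set A := Finset.univ.filter fun u : V =>
      (bipGraph 𝔥).dist (Sum.inr u) (Sum.inr v) ≤ 2 with hA
  set B := Finset.univ.filter fun u : V =>
      (bipGraph 𝔥).dist (Sum.inr u) (Sum.inr v') ≤ 2 with hB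
  have hAc := ball_card hconn D Dhat hdegV hdegVhat v
  have hBc := ball_card hconn D Dhat hdegV hdegVhat v'
  have hyp : (A ∪ B).card < Fintype.card V := by
    calc (A ∪ B).card ≤ A.card + B.card := Finset.card_union_le A B
      _ ≤ D * Dhat + D * Dhat := Nat.add_le_add hAc hBc
      _ = 2 * D * Dhat := by ring
      _ < Fintype.card V := hcard
  obtain ⟨z, hz⟩ : ∃ z : V, z ∉ A ∪ B := by
    by_contra hcon
    push_neg at hcon
    have : (Finset.univ : Finset V) ⊆ A ∪ B := fun z _ => hcon z
    have := Finset.card_le_card this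
    rw [Finset.card_univ] at this
    omega
  rw [Finset.mem_union] at hz
  push_neg at hz
  obtain ⟨hz1, hz2⟩ := hz
  rw [hA, mem_filter] at hz1
  rw [hB, mem_filter] at hz2
  simp only [mem_univ, true_and, not_le] at hz1 hz2
  have he1 := dist_vv_even hconn z v
  have he2 := dist_vv_even hconn z v'
  refine ⟨z, ?_, ?_⟩ <;> rw [SimpleGraph.dist_comm] <;> omega

/-- From a geodesic of length ≥ 4 between two `V`-vertices, extract the hat vertex at
distance 3 and the `V`-vertex at distance 4 from the start. -/
lemma geodesic34 {v z : V} (hk : 4 ≤ (bipGraph 𝔥).dist (Sum.inr v) (Sum.inr z)) :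
    ∃ (w1 : Vhat) (t : V),
      (bipGraph 𝔥).dist (Sum.inr v) (Sum.inl w1) = 3 ∧
      (bipGraph 𝔥).dist (Sum.inl w1) (Sum.inr z) =
        (bipGraph 𝔥).dist (Sum.inr v) (Sum.inr z) - 3 ∧
      𝔥 w1 t = 1 ∧
      (bipGraph 𝔥).dist (Sum.inr v) (Sum.inr t) = 4 := by
  obtain ⟨p, hp⟩ := hconn.exists_walk_length_eq_dist (Sum.inr v) (Sum.inr z)
  have hg3 := geodesic_dists hconn p hp 3 (by omega)
  have hg4 := geodesic_dists hconn p hp 4 (by omega)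
  have hside3 : side (p.getVert 3) = 0 := by
    have hparity := dist_parity hconn (Sum.inr v) (p.getVert 3)
    rw [hg3.1] at hparity
    have hkey : ∀ a : ZMod 2, ((3 : ℕ) : ZMod 2) = 1 + a → a = 0 := by decide
    exact hkey _ (by simpa [side] using hparity)
  have hside4 : side (p.getVert 4) = 1 := by
    have hparity := dist_parity hconn (Sum.inr v) (p.getVert 4)
    rw [hg4.1] at hparity
    have hkey : ∀ a : ZMod 2, ((4 : ℕ) : ZMod 2) = 1 + a → a = 1 := by decide
    exact hkey _ (by simpa [side] using hparity)
  obtain ⟨w1, hw1⟩ : ∃ w1, p.getVert 3 = Sum.inl w1 := by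
    rcases hh : p.getVert 3 with w1 | t
    · exact ⟨w1, rfl⟩
    · rw [hh] at hside3; exact absurd hside3 (by simp [side])
  obtain ⟨t, ht⟩ : ∃ t, p.getVert 4 = Sum.inr t := by
    rcases hh : p.getVert 4 with w2 | t
    · rw [hh] at hside4; exact absurd hside4 (by simp [side])
    · exact ⟨t, rfl⟩
  have hadj : (bipGraph 𝔥).Adj (p.getVert 3) (p.getVert 4) :=
    p.adj_getVert_succ (by omega)
  rw [hw1, ht] at hadj
  refine ⟨w1, t, ?_, ?_, hadj, ?_⟩
  · rw [← hw1, hg3.1]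
  · rw [← hw1]
    have := hg3.2
    rw [hp] at this
    exact this
  · rw [← ht, hg4.1]

omit hconn in
lemma exists_one_of_ne_zero {σ : V → ZMod 2} (h : σ ≠ 0) : ∃ v, σ v = 1 := by
  by_contra hcon
  push_neg at hcon
  exact h (funext fun v => (zm (σ v)).resolve_right (hcon v))

omit hconn in
lemma four_cancel (σ r s : V → ZMod 2) : σ + r + s + r = σ + s := by
  funext u
  simp only [Pi.add_apply]
  have : ∀ a b c : ZMod 2, a + b + c + b = a + c := by decide
  exact this _ _ _

/-- Key lemma: adding a single row preserves the `Rel`-class, as long as both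
configurations are nonzero. -/
lemma main (D Dhat : ℕ)
    (hdegV : ∀ v : V, (Finset.univ.filter fun w : Vhat => 𝔥 w v = 1).card ≤ D)
    (hdegVhat : ∀ w : Vhat, (Finset.univ.filter fun v : V => 𝔥 w v = 1).card ≤ Dhat)
    (hcard : 2 * D * Dhat < Fintype.card V)
    (σ : V → ZMod 2) (wh : Vhat) (hσ : σ ≠ 0) (hσ' : σ + (fun u => 𝔥 wh u) ≠ 0) :
    Rel 𝔥 σ (σ + fun u => 𝔥 wh u) := by
  by_cases hfar : ∃ u, σ u = 1 ∧ 3 ≤ (bipGraph 𝔥).dist (Sum.inr u) (Sum.inl wh)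
  · obtain ⟨u, hu, h3⟩ := hfar
    exact main' hconn _ σ u wh hu rfl h3
  push_neg at hfar
  -- every support vertex of σ is adjacent to wh
  have hnear : ∀ u, σ u = 1 → 𝔥 wh u = 1 := by
    intro u hu
    rcases zm (𝔥 wh u) with h0 | h1
    · exact absurd (three_le_dist_of_entry_zero hconn h0) (not_le.mpr (hfar u hu))
    · exact h1
  obtain ⟨v, hv⟩ := exists_one_of_ne_zero hσ
  obtain ⟨v', hv'⟩ := exists_one_of_ne_zero hσ'
  have hwhv : 𝔥 wh v = 1 := hnear v hv
  have hwhv' : 𝔥 wh v' = 1 := by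
    rcases zm (𝔥 wh v') with h0 | h1
    · have hσv' : σ v' = 1 := by
        have h := hv'
        rw [Pi.add_apply, h0, add_zero] at h
        exact h
      rw [hnear v' hσv'] at h0
      exact absurd h0 (by decide)
    · exact h1
  have hσv' : σ v' = 0 := by
    have h := hv'
    rw [Pi.add_apply, hwhv'] at h
    have hkey : ∀ a : ZMod 2, a + 1 = 1 → a = 0 := by decide
    exact hkey _ h
  have hdvwh : (bipGraph 𝔥).dist (Sum.inr v) (Sum.inl wh) = 1 := entry_one_iff_dist_one.mp hwhv
  have hdv'wh : (bipGraph 𝔥).dist (Sum.inr v') (Sum.inl wh) = 1 := entry_one_iff_dist_one.mp hwhv'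
  obtain ⟨z, hzv, hzv'⟩ := exists_far hconn D Dhat hdegV hdegVhat hcard v v'
  obtain ⟨wh1, t1, hd31, hdz1, he1, hd41⟩ := geodesic34 hconn hzv
  obtain ⟨wh2, t2, hd32, hdz2, he2, hd42⟩ := geodesic34 hconn hzv'
  -- t1 is at distance ≥ 3 from wh, hence not in the support of σ
  have ht1far : 3 ≤ (bipGraph 𝔥).dist (Sum.inr t1) (Sum.inl wh) := by
    have tri : (bipGraph 𝔥).dist (Sum.inr v) (Sum.inr t1) ≤
        (bipGraph 𝔥).dist (Sum.inr v) (Sum.inl wh) +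
        (bipGraph 𝔥).dist (Sum.inl wh) (Sum.inr t1) := hconn.dist_triangle
    rw [SimpleGraph.dist_comm (G := bipGraph 𝔥) (u := Sum.inl wh) (v := Sum.inr t1)] at tri
    omega
  have hσt1 : σ t1 = 0 := by
    rcases zm (σ t1) with h0 | h1
    · exact h0
    · rw [entry_one_iff_dist_one.mp (hnear t1 h1)] at ht1far; omega
  have ht2far : 3 ≤ (bipGraph 𝔥).dist (Sum.inr t2) (Sum.inl wh) := by
    have tri : (bipGraph 𝔥).dist (Sum.inr v') (Sum.inr t2) ≤
        (bipGraph 𝔥).dist (Sum.inr v') (Sum.inl wh) +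
        (bipGraph 𝔥).dist (Sum.inl wh) (Sum.inr t2) := hconn.dist_triangle
    rw [SimpleGraph.dist_comm (G := bipGraph 𝔥) (u := Sum.inl wh) (v := Sum.inr t2)] at tri
    omega
  have hσt2 : σ t2 = 0 := by
    rcases zm (σ t2) with h0 | h1
    · exact h0
    · rw [entry_one_iff_dist_one.mp (hnear t2 h1)] at ht2far; omega
  have hwht1 : 𝔥 wh t1 = 0 := entry_zero_of_dist_ne_one (by omega)
  have hwht2 : 𝔥 wh t2 = 0 := entry_zero_of_dist_ne_one (by omega)
  by_cases hA : ∃ u, 𝔥 wh u = 1 ∧ σ u = 0 ∧ 𝔥 wh1 u = 0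
  · obtain ⟨u, hu1, hu2, hu3⟩ := hA
    have s1 : Flip 𝔥 σ (σ + fun s => 𝔥 wh1 s) := ⟨v, wh1, hd31, hv, rfl⟩
    have s2 : Rel 𝔥 (σ + fun s => 𝔥 wh1 s) ((σ + fun s => 𝔥 wh1 s) + fun s => 𝔥 wh s) := by
      apply main' hconn _ _ t1 wh _ rfl ht1far
      simp [Pi.add_apply, hσt1, he1]
    have s3 : Rel 𝔥 ((σ + fun s => 𝔥 wh1 s) + fun s => 𝔥 wh s)
        (((σ + fun s => 𝔥 wh1 s) + fun s => 𝔥 wh s) + fun s => 𝔥 wh1 s) := by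
      apply main' hconn _ _ u wh1 _ rfl (three_le_dist_of_entry_zero hconn hu3)
      simp [Pi.add_apply, hu1, hu2, hu3]
    have heq : (((σ + fun s => 𝔥 wh1 s) + fun s => 𝔥 wh s) + fun s => 𝔥 wh1 s)
        = σ + fun s => 𝔥 wh s := four_cancel σ _ _
    rw [heq] at s3
    exact (Relation.ReflTransGen.single s1).trans (s2.trans s3)
  by_cases hB : ∃ u, σ u = 1 ∧ 𝔥 wh2 u = 0
  · obtain ⟨u, hu1, hu2⟩ := hB
    apply rel_symm
    have s1 : Flip 𝔥 (σ + fun s => 𝔥 wh s) ((σ + fun s => 𝔥 wh s) + fun s => 𝔥 wh2 s) :=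
      ⟨v', wh2, hd32, hv', rfl⟩
    have s2 : Rel 𝔥 ((σ + fun s => 𝔥 wh s) + fun s => 𝔥 wh2 s)
        (((σ + fun s => 𝔥 wh s) + fun s => 𝔥 wh2 s) + fun s => 𝔥 wh s) := by
      apply main' hconn _ _ t2 wh _ rfl ht2far
      simp [Pi.add_apply, hσt2, hwht2, he2]
    have heq2 : (((σ + fun s => 𝔥 wh s) + fun s => 𝔥 wh2 s) + fun s => 𝔥 wh s)
        = σ + fun s => 𝔥 wh2 s := four_cancel σ _ _
    rw [heq2] at s2
    have s3 : Rel 𝔥 (σ + fun s => 𝔥 wh2 s) ((σ + fun s => 𝔥 wh2 s) + fun s => 𝔥 wh2 s) := by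
      apply main' hconn _ _ u wh2 _ rfl (three_le_dist_of_entry_zero hconn hu2)
      simp [Pi.add_apply, hu1, hu2]
    have heq3 : ((σ + fun s => 𝔥 wh2 s) + fun s => 𝔥 wh2 s) = σ := row_cancel σ _
    rw [heq3] at s3
    exact (Relation.ReflTransGen.single s1).trans (s2.trans s3)
  -- contradiction case
  exfalso
  push_neg at hA hB
  have h1 : 𝔥 wh1 v' = 1 := by
    rcases zm (𝔥 wh1 v') with h0 | h1
    · exact absurd h0 (hA v' hwhv' hσv')
    · exact h1
  have h2 : 𝔥 wh2 v = 1 := by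
    rcases zm (𝔥 wh2 v) with h0 | h1
    · exact absurd h0 (hB v hv)
    · exact h1
  have hd11 : (bipGraph 𝔥).dist (Sum.inr v') (Sum.inl wh1) = 1 := entry_one_iff_dist_one.mp h1
  have hd12 : (bipGraph 𝔥).dist (Sum.inr v) (Sum.inl wh2) = 1 := entry_one_iff_dist_one.mp h2
  have tri1 : (bipGraph 𝔥).dist (Sum.inr v') (Sum.inr z) ≤
      (bipGraph 𝔥).dist (Sum.inr v') (Sum.inl wh1) +
      (bipGraph 𝔥).dist (Sum.inl wh1) (Sum.inr z) := hconn.dist_triangle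
  have tri2 : (bipGraph 𝔥).dist (Sum.inr v) (Sum.inr z) ≤
      (bipGraph 𝔥).dist (Sum.inr v) (Sum.inl wh2) +
      (bipGraph 𝔥).dist (Sum.inl wh2) (Sum.inr z) := hconn.dist_triangle
  omega

lemma coset (D Dhat : ℕ)
    (hdegV : ∀ v : V, (Finset.univ.filter fun w : Vhat => 𝔥 w v = 1).card ≤ D)
    (hdegVhat : ∀ w : Vhat, (Finset.univ.filter fun v : V => 𝔥 w v = 1).card ≤ Dhat)
    (hcard : 2 * D * Dhat < Fintype.card V) :
    ∀ (n : ℕ) (S : Finset Vhat), S.card ≤ n → ∀ σ : V → ZMod 2, σ ≠ 0 →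
      (σ + ∑ w ∈ S, fun u => 𝔥 w u) ≠ 0 →
      Rel 𝔥 σ (σ + ∑ w ∈ S, fun u => 𝔥 w u) := by
  intro n
  induction n with
  | zero =>
    intro S hS σ hσ hσ'
    have : S = ∅ := Finset.card_eq_zero.mp (Nat.le_zero.mp hS)
    subst this
    rw [Finset.sum_empty, add_zero]; exact Relation.ReflTransGen.refl
  | succ n ihn =>
    intro S hS σ hσ hσ'
    rcases S.eq_empty_or_nonempty with rfl | ⟨w0, hw0⟩
    · rw [Finset.sum_empty, add_zero]; exact Relation.ReflTransGen.refl
    by_cases hex : ∃ w ∈ S, σ + (fun u => 𝔥 w u) ≠ 0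
    · obtain ⟨w, hw, hne⟩ := hex
      have hsplit : (∑ x ∈ S, fun u => 𝔥 x u) =
          (fun u => 𝔥 w u) + ∑ x ∈ S.erase w, fun u => 𝔥 x u :=
        (Finset.add_sum_erase S _ hw).symm
      have hre : (σ + ∑ x ∈ S, fun u => 𝔥 x u) =
          (σ + fun u => 𝔥 w u) + ∑ x ∈ S.erase w, fun u => 𝔥 x u := by
        rw [hsplit, add_assoc]
      have h1 : Rel 𝔥 σ (σ + fun u => 𝔥 w u) :=
        main hconn D Dhat hdegV hdegVhat hcard σ w hσ hne
      have h2 : Rel 𝔥 (σ + fun u => 𝔥 w u)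
          ((σ + fun u => 𝔥 w u) + ∑ x ∈ S.erase w, fun u => 𝔥 x u) := by
        apply ihn (S.erase w) _ _ hne
        · rw [← hre]; exact hσ'
        · have := Finset.card_erase_of_mem hw
          omega
      rw [hre]
      exact h1.trans h2
    · push_neg at hex
      have hrow : ∀ w ∈ S, (fun u => 𝔥 w u) = σ := by
        intro w hw
        have h0 : σ + (fun u => 𝔥 w u) = 0 := hex w hw
        funext u
        have := congrFun h0 u
        rw [Pi.add_apply] at this
        have hkey : ∀ a b : ZMod 2, a + b = 0 → b = a := by decide
        exact hkey _ _ this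
      by_cases hone : ∃ w1 ∈ S, w1 ≠ w0
      · obtain ⟨w1, hw1, hne1⟩ := hone
        have hw1e : w1 ∈ S.erase w0 := Finset.mem_erase.mpr ⟨hne1, hw1⟩
        have e1 : (∑ x ∈ S, fun u => 𝔥 x u) =
            (∑ x ∈ S.erase w0, fun u => 𝔥 x u) + fun u => 𝔥 w0 u :=
          (Finset.sum_erase_add _ _ hw0).symm
        have e2 : (∑ x ∈ S.erase w0, fun u => 𝔥 x u) =
            (∑ x ∈ (S.erase w0).erase w1, fun u => 𝔥 x u) + fun u => 𝔥 w1 u :=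
          (Finset.sum_erase_add _ _ hw1e).symm
        have hzero : ((fun u => 𝔥 w1 u) + fun u => 𝔥 w0 u) = (0 : V → ZMod 2) := by
          rw [hrow w0 hw0, hrow w1 hw1]
          funext u
          have : ∀ a : ZMod 2, a + a = 0 := by decide
          exact this _
        have hsum : (∑ x ∈ S, fun u => 𝔥 x u) =
            ∑ x ∈ (S.erase w0).erase w1, fun u => 𝔥 x u := by
          rw [e1, e2, add_assoc, hzero, add_zero]
        rw [hsum] at hσ' ⊢
        apply ihn _ _ _ hσ hσ'
        have hc0 := Finset.card_erase_of_mem hw0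
        have hc1 := Finset.card_erase_of_mem hw1e
        have : 1 ≤ S.card := Finset.card_pos.mpr ⟨w0, hw0⟩
        omega
      · push_neg at hone
        have hSsing : S = {w0} := by
          apply Finset.eq_singleton_iff_unique_mem.mpr
          exact ⟨hw0, fun x hx => hone x hx⟩
        rw [hSsing] at hσ'
        rw [Finset.sum_singleton] at hσ'
        exact absurd (hex w0 hw0) hσ'

end BipAux

/-- if `ψ` satisfies the local flip constraints — for every `v ∈ V`, `v̂ ∈ Vhat`
with `d(v, v̂) = 3` and every configuration `σ` with `σ v = 1` one has `ψ(σ) = ψ(σ + r_{v̂})` —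
then `ψ` takes equal values on any two nonzero configurations differing by an element of the
row space of `𝔥`. -/


theorem equal_weights_of_local_flip_constraints
    {Vhat V : Type*} [Fintype Vhat] [Fintype V] [DecidableEq Vhat] [DecidableEq V]
    [Nonempty Vhat] [Nonempty V]
    (𝔥 : Matrix Vhat V (ZMod 2)) (D Dhat : ℕ) (hD : 1 ≤ D) (hDhat : 1 ≤ Dhat)
    (hconn : (bipGraph 𝔥).Connected)
    (hdegV : ∀ v : V, (Finset.univ.filter fun w : Vhat => 𝔥 w v = 1).card ≤ D)
    (hdegVhat : ∀ w : Vhat, (Finset.univ.filter fun v : V => 𝔥 w v = 1).card ≤ Dhat)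
    (hcard : 2 * D * Dhat < Fintype.card V)
    (ψ : (V → ZMod 2) → ℂ)
    (hflip : ∀ (v : V) (w : Vhat) (σ : V → ZMod 2),
      (bipGraph 𝔥).dist (Sum.inr v) (Sum.inl w) = 3 → σ v = 1 →
        ψ σ = ψ (σ + fun u => 𝔥 w u))
    (σ σ' : V → ZMod 2) (hσ : σ ≠ 0) (hσ' : σ' ≠ 0)
    (hrow : ∃ x : Vhat → ZMod 2, σ' = σ + 𝔥.transpose.mulVec x) :
    ψ σ' = ψ σ := by
  obtain ⟨x, hx⟩ := hrow
  have hsum : 𝔥.transpose.mulVec x =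
      ∑ w ∈ Finset.univ.filter (fun w : Vhat => x w = 1), fun u => 𝔥 w u := by
    funext v
    rw [Finset.sum_apply]
    simp only [Matrix.mulVec, Matrix.transpose_apply, dotProduct]
    rw [Finset.sum_filter]
    apply Finset.sum_congr rfl
    intro w _
    rcases BipAux.zm (x w) with h0 | h1
    · simp [h0]
    · simp [h1]
  rw [hsum] at hx
  have hrel : BipAux.Rel 𝔥 σ (σ + ∑ w ∈ Finset.univ.filter (fun w : Vhat => x w = 1),
      fun u => 𝔥 w u) := by
    apply BipAux.coset hconn D Dhat hdegV hdegVhat hcard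
      (Finset.univ.filter (fun w : Vhat => x w = 1)).card _ le_rfl σ hσ
    rw [← hx]
    exact hσ'
  have := BipAux.rel_psi ψ hflip hrel
  rw [hx]
  exact this.symm


end
end

section
/- Let k, n be positive integers with n ≥ k, and let G be a finite connected hypergraph with maximum order at most k and at least n vertices. Then there exists a vertex subset B with n ≤ |B| ≤ n + k such that the induced sub-hypergraph on B is connected. -/
open scoped Classical

section

variable {V : Type*} [Fintype V] [DecidableEq V]

/-- Adjacency of two vertices inside the sub-hypergraph of `(V, E)` induced on `U`:
`u ≠ v` and some hyperedge of `E` entirely contained in `U` contains both. -/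
def hypAdj (E : Finset (Finset V)) (U : Finset V) (u v : V) : Prop :=
  u ≠ v ∧ ∃ e ∈ E, e ⊆ U ∧ u ∈ e ∧ v ∈ e

/-- Connectedness of the sub-hypergraph of `(V, E)` induced on `U`. -/
def hypConn (E : Finset (Finset V)) (U : Finset V) : Prop :=
  ∀ u ∈ U, ∀ v ∈ U, Relation.ReflTransGen (hypAdj E U) u v

lemma hypAdj_mono (E : Finset (Finset V)) {U U' : Finset V} (h : U ⊆ U') {u v : V}
    (hadj : hypAdj E U u v) : hypAdj E U' u v := by
  obtain ⟨hne, e, he, heU, hu, hv⟩ := hadj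
  exact ⟨hne, e, he, heU.trans h, hu, hv⟩

lemma hypAdj_symm (E : Finset (Finset V)) (U : Finset V) :
    Symmetric (hypAdj E U) := by
  rintro u v ⟨hne, e, he, heU, hu, hv⟩
  exact ⟨hne.symm, e, he, heU, hv, hu⟩

lemma crossing_edge (E : Finset (Finset V)) (B : Finset V) :
    ∀ u v : V, Relation.ReflTransGen (hypAdj E Finset.univ) u v → u ∈ B → v ∉ B →
      ∃ e ∈ E, (∃ x ∈ e, x ∈ B) ∧ ∃ y ∈ e, y ∉ B := by
  intro u v h
  induction h with
  | refl => intro hu hv; exact absurd hu hv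
  | @tail b c _ hadj ih =>
    intro hu hv
    by_cases hb : b ∈ B
    · obtain ⟨hne, e, he, _, hbe, hce⟩ := hadj
      exact ⟨e, he, ⟨b, hbe, hb⟩, ⟨c, hce, hv⟩⟩
    · exact ih hu hb

lemma conn_union (E : Finset (Finset V)) (B e : Finset V) (he : e ∈ E)
    (hconnB : hypConn E B) (hmeet : ∃ w ∈ e, w ∈ B) : hypConn E (B ∪ e) := by
  obtain ⟨w, hwe, hwB⟩ := hmeet
  have hBsub : B ⊆ B ∪ e := Finset.subset_union_left
  have hesub : e ⊆ B ∪ e := Finset.subset_union_right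
  have key : ∀ x ∈ B ∪ e, Relation.ReflTransGen (hypAdj E (B ∪ e)) x w := by
    intro x hx
    rcases Finset.mem_union.mp hx with hxB | hxe
    · exact Relation.ReflTransGen.mono (fun a b hab => hypAdj_mono E hBsub hab) x w (hconnB x hxB w hwB)
    · by_cases hxw : x = w
      · exact hxw ▸ .refl
      · exact .single ⟨hxw, e, he, hesub, hxe, hwe⟩
  have hsymm : Symmetric (Relation.ReflTransGen (hypAdj E (B ∪ e))) :=
    by
      haveI : Std.Symm (hypAdj E (B ∪ e)) := ⟨fun a b h => hypAdj_symm E (B ∪ e) h⟩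
      exact fun a b h => Std.Symm.symm a b h
  intro u hu v hv
  exact (key u hu).trans (hsymm (key v hv))

/-- a finite connected hypergraph with maximum order at most `k` and at least
`n ≥ k` vertices contains a "good part": a vertex subset `B` with `n ≤ |B| ≤ n + k` whose
induced sub-hypergraph is connected. -/
theorem hypergraph_good_part
    (E : Finset (Finset V)) (hEne : ∀ e ∈ E, e.Nonempty)
    (k n : ℕ) (hk : 1 ≤ k) (hn : 1 ≤ n) (hnk : k ≤ n)
    (hord : ∀ e ∈ E, e.card ≤ k)
    (hconn : hypConn E Finset.univ)
    (hcardV : n ≤ Fintype.card V) :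
    ∃ B : Finset V, n ≤ B.card ∧ B.card ≤ n + k ∧ hypConn E B := by
  have grow : ∀ d : ℕ, ∀ B : Finset V, B.Nonempty → hypConn E B → B.card ≤ n →
      n - B.card ≤ d → ∃ B' : Finset V, n ≤ B'.card ∧ B'.card ≤ n + k ∧ hypConn E B' := by
    intro d
    induction d with
    | zero =>
      intro B hBne hBconn hBle hd
      have : B.card = n := by omega
      exact ⟨B, by omega, by omega, hBconn⟩
    | succ d ih =>
      intro B hBne hBconn hBle hd
      by_cases hcase : B.card = n
      · exact ⟨B, by omega, by omega, hBconn⟩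
      · have hBlt : B.card < n := lt_of_le_of_ne hBle hcase
        have hBne' : B ≠ Finset.univ := by
          intro h
          rw [h, Finset.card_univ] at hBlt
          omega
        obtain ⟨v, hv⟩ : ∃ v, v ∉ B := by
          by_contra h
          push_neg at h
          exact hBne' (Finset.eq_univ_iff_forall.mpr h)
        obtain ⟨u, hu⟩ := hBne
        obtain ⟨e, he, ⟨x, hxe, hxB⟩, ⟨y, hye, hyB⟩⟩ :=
          crossing_edge E B u v (hconn u (Finset.mem_univ u) v (Finset.mem_univ v)) hu hv
        set B' := B ∪ e with hB'
        have hconn' : hypConn E B' := conn_union E B e he hBconn ⟨x, hxe, hxB⟩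
        have hcard_lt : B.card < B'.card := by
          apply Finset.card_lt_card
          constructor
          · exact Finset.subset_union_left
          · intro hsub
            exact hyB (hsub (Finset.mem_union_right _ hye))
        have hcard_le : B'.card ≤ B.card + k := by
          calc B'.card ≤ B.card + e.card := Finset.card_union_le B e
            _ ≤ B.card + k := by have := hord e he; omega
        by_cases h' : B'.card ≤ n
        · exact ih B' ⟨u, Finset.mem_union_left _ hu⟩ hconn' h'
            (by omega)
        · exact ⟨B', by omega, by omega, hconn'⟩
  obtain ⟨v0⟩ : Nonempty V := Fintype.card_pos_iff.mp (by omega)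
  refine grow n {v0} ⟨v0, Finset.mem_singleton_self v0⟩ ?_ (by simpa using hn) (by omega)
  intro u hu v hv
  simp only [Finset.mem_singleton] at hu hv
  subst hu; subst hv
  exact .refl

end
end

section
/- Let S be an n × n integer matrix and r a natural number such that for every prime p, the rank of the reduction of S modulo p (as a matrix over the field ZMod p) is at least r. Then for every integer N ≥ 1, the image of the linear map (ZMod N)^n → (ZMod N)^n given by multiplication by the reduction of S modulo N has cardinality at least N^r. -/
open scoped Classical
open Matrix

section

/-- From a family whose span has finrank at least `r`, extract `r` indices giving a
linearly independent subfamily. -/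
lemma exists_injective_linearIndependent_aux {K W : Type*} [Field K] [AddCommGroup W] [Module K W]
    {n r : ℕ} (v : Fin n → W) (h : r ≤ Module.finrank K (Submodule.span K (Set.range v))) :
    ∃ f : Fin r → Fin n, Function.Injective f ∧ LinearIndependent K (v ∘ f) := by
  obtain ⟨b, hb, hspan, hli⟩ := exists_linearIndependent K (Set.range v)
  have hfin : b.Finite := (Set.finite_range v).subset hb
  haveI := hfin.fintype
  have hcard : r ≤ Fintype.card b := by
    have h1 := finrank_span_set_eq_card hli
    rw [Set.toFinset_card] at h1
    rw [hspan] at h1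
    omega
  have hcard' : Fintype.card (Fin r) ≤ Fintype.card b := by simpa using hcard
  obtain ⟨j⟩ := Function.Embedding.nonempty_of_card_le hcard' 
  choose f hf using fun i : Fin r => hb (j i).2
  have hvf : v ∘ f = fun i => ((j i : b) : W) := by funext i; exact hf i
  have hli2 : LinearIndependent K (v ∘ f) := by
    rw [hvf]; exact hli.comp j j.injective
  refine ⟨f, ?_, hli2⟩
  intro a b' hab
  have : (v ∘ f) a = (v ∘ f) b' := by simp [Function.comp, hab]
  rw [hvf] at this
  exact j.injective (Subtype.coe_injective this)

/-- If a square matrix over a field has rank at least `r`, then it has an `r × r`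
submatrix with nonzero determinant. -/
lemma exists_minor_det_ne_zero {K : Type*} [Field K] {n r : ℕ} (A : Matrix (Fin n) (Fin n) K)
    (h : r ≤ A.rank) :
    ∃ f g : Fin r → Fin n, Function.Injective g ∧ (A.submatrix f g).det ≠ 0 := by
  rw [Matrix.rank_eq_finrank_span_cols] at h
  obtain ⟨g, hg, hgli⟩ := exists_injective_linearIndependent_aux (W := Fin n → K) (fun j i => A i j) h
  have hgli' : LinearIndependent K (Aᵀ ∘ g) := hgli
  set C : Matrix (Fin n) (Fin r) K := A.submatrix id g with hC
  have hCT : Cᵀ = Aᵀ ∘ g := by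
    funext i j; simp [hC, Matrix.transpose_apply, Function.comp]
  have hrankC : C.rank = r := by
    rw [Matrix.rank_eq_finrank_span_cols, Matrix.col, hCT, finrank_span_eq_card hgli', Fintype.card_fin]
  have hrows : r ≤ Module.finrank K (Submodule.span K (Set.range (fun i => C i))) := by
    have h2 : Cᵀ.rank = r := by rw [Matrix.rank_transpose, hrankC]
    rw [Matrix.rank_eq_finrank_span_cols, Matrix.col, Matrix.transpose_transpose] at h2
    exact h2.ge
  obtain ⟨f, hf, hfli⟩ := exists_injective_linearIndependent_aux (fun i => C i) hrows
  refine ⟨f, g, hg, ?_⟩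
  have hD : (fun i => (A.submatrix f g) i) = (fun i => C i) ∘ f := by
    funext i; funext i'; simp [hC]
  have : IsUnit (A.submatrix f g) := by
    rw [← Matrix.linearIndependent_rows_iff_isUnit]
    change LinearIndependent K (fun i => (A.submatrix f g) i)
    rw [hD]; exact hfli
  exact (Matrix.isUnit_iff_isUnit_det _ |>.mp this).ne_zero

/-- If some `r × r` submatrix (with injective column selection) has unit determinant, then
the range of `mulVec` has at least `card R ^ r` elements. -/
lemma card_range_mulVec_ge {R : Type*} [CommRing R] [Fintype R]
    {n r : ℕ} (A : Matrix (Fin n) (Fin n) R) (f g : Fin r → Fin n)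
    (hg : Function.Injective g) (hu : IsUnit (A.submatrix f g).det) :
    Fintype.card R ^ r ≤ Nat.card (Set.range A.mulVec) := by
  haveI := (A.submatrix f g).invertibleOfIsUnitDet hu
  set q : (Fin n → R) → (Fin r → R) := (fun y => y ∘ f) ∘ A.mulVec with hq
  have hsurj : Function.Surjective q := by
    intro t
    set z := (⅟(A.submatrix f g)).mulVec t with hz
    refine ⟨Function.extend g z 0, ?_⟩
    have key : ∀ i, A.mulVec (Function.extend g z 0) (f i) = (A.submatrix f g).mulVec z i := by
      intro i
      show (∑ j, A (f i) j * Function.extend g z 0 j) = ∑ i', A (f i) (g i') * z i'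
      rw [← Finset.sum_subset (Finset.subset_univ (Finset.univ.image g))]
      · rw [Finset.sum_image (fun a _ b _ hab => hg hab)]
        refine Finset.sum_congr rfl fun i' _ => ?_
        rw [hg.extend_apply]
      · intro j _ hj
        have hnj : ¬ ∃ a, g a = j := by simpa using hj
        rw [Function.extend_apply' _ _ _ hnj]
        simp
    have : A.mulVec (Function.extend g z 0) ∘ f = t := by
      funext i
      rw [Function.comp_apply, key, hz, Matrix.mulVec_mulVec, mul_invOf_self, Matrix.one_mulVec]
    exact this
  have h1 : Set.range q = Set.univ := Set.range_eq_univ.mpr hsurj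
  calc Fintype.card R ^ r = Nat.card (Fin r → R) := by
        simp [Nat.card_eq_fintype_card]
    _ = Nat.card (Set.range q) := by rw [h1, Nat.card_univ]
    _ ≤ Nat.card (Set.range A.mulVec) := by
        rw [hq, Set.range_comp]
        exact Nat.card_image_le (Set.toFinite _)

lemma isUnit_intCast_zmod_pow {p : ℕ} (hp : p.Prime) (k : ℕ) (d : ℤ)
    (h : (d : ZMod p) ≠ 0) : IsUnit ((d : ℤ) : ZMod (p ^ k)) := by
  have hpd : ¬ (p : ℤ) ∣ d := by
    rwa [Ne, ZMod.intCast_zmod_eq_zero_iff_dvd] at h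
  have hpd' : ¬ p ∣ d.natAbs := by
    rw [← Int.natAbs_dvd_natAbs] at hpd
    simpa using hpd
  have hcop : Nat.Coprime d.natAbs (p ^ k) :=
    Nat.Coprime.pow_right k ((hp.coprime_iff_not_dvd.mpr hpd').symm)
  have hu : IsUnit ((d.natAbs : ℕ) : ZMod (p ^ k)) := (ZMod.isUnit_iff_coprime _ _).mpr hcop
  rcases Int.natAbs_eq d with hd | hd
  · rw [hd, Int.cast_natCast]; exact hu
  · rw [hd, Int.cast_neg, Int.cast_natCast]; exact hu.neg

lemma mulVec_map_comm {n : ℕ} (S : Matrix (Fin n) (Fin n) ℤ) {R R' : Type*} [CommRing R]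
    [CommRing R'] (φ : R →+* R') (x : Fin n → R) :
    (S.map (Int.cast : ℤ → R')).mulVec (fun j => φ (x j)) =
      fun i => φ ((S.map (Int.cast : ℤ → R)).mulVec x i) := by
  funext i
  show (∑ j, (S i j : R') * φ (x j)) = φ (∑ j, (S i j : R) * x j)
  rw [map_sum]
  refine Finset.sum_congr rfl fun j _ => ?_
  rw [_root_.map_mul, map_intCast]

lemma prime_pow_case (n r : ℕ) (S : Matrix (Fin n) (Fin n) ℤ) (p k : ℕ) (hp : p.Prime)
    (hrank : r ≤ (S.map (Int.cast : ℤ → ZMod p)).rank) :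
    (p ^ k) ^ r ≤ Nat.card
      (Set.range fun x : Fin n → ZMod (p ^ k) =>
        (S.map (Int.cast : ℤ → ZMod (p ^ k))).mulVec x) := by
  haveI : Fact p.Prime := ⟨hp⟩
  haveI : NeZero (p ^ k) := ⟨pow_ne_zero k hp.pos.ne'⟩
  obtain ⟨f, g, hg, hdet⟩ := exists_minor_det_ne_zero (S.map (Int.cast : ℤ → ZMod p)) hrank
  have hsub : ∀ (M : ℕ), (S.map (Int.cast : ℤ → ZMod M)).submatrix f g
      = (S.submatrix f g).map (Int.cast : ℤ → ZMod M) := by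
    intro M; funext i j; simp [Matrix.submatrix_apply, Matrix.map_apply]
  have hmapdet : ∀ (M : ℕ), ((S.submatrix f g).map (Int.cast : ℤ → ZMod M)).det
      = (((S.submatrix f g).det : ℤ) : ZMod M) := by
    intro M
    have := RingHom.map_det (Int.castRingHom (ZMod M)) (S.submatrix f g)
    simpa [RingHom.mapMatrix_apply] using this.symm
  have hdet' : (((S.submatrix f g).det : ℤ) : ZMod p) ≠ 0 := by
    rw [hsub p, hmapdet p] at hdet
    exact hdet
  have hunit : IsUnit ((S.map (Int.cast : ℤ → ZMod (p ^ k))).submatrix f g).det := by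
    rw [hsub (p ^ k), hmapdet (p ^ k)]
    exact isUnit_intCast_zmod_pow hp k _ hdet'
  have := card_range_mulVec_ge (S.map (Int.cast : ℤ → ZMod (p ^ k))) f g hg hunit
  rwa [ZMod.card] at this

lemma crt_step (n r : ℕ) (S : Matrix (Fin n) (Fin n) ℤ) (a b : ℕ) (ha0 : a ≠ 0) (hb0 : b ≠ 0)
    (hab : Nat.Coprime a b)
    (ha : a ^ r ≤ Nat.card
      (Set.range fun x : Fin n → ZMod a => (S.map (Int.cast : ℤ → ZMod a)).mulVec x))
    (hb : b ^ r ≤ Nat.card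
      (Set.range fun x : Fin n → ZMod b => (S.map (Int.cast : ℤ → ZMod b)).mulVec x)) :
    (a * b) ^ r ≤ Nat.card
      (Set.range fun x : Fin n → ZMod (a * b) =>
        (S.map (Int.cast : ℤ → ZMod (a * b))).mulVec x) := by
  haveI : NeZero a := ⟨ha0⟩
  haveI : NeZero b := ⟨hb0⟩
  haveI : NeZero (a * b) := ⟨mul_ne_zero ha0 hb0⟩
  set e := ZMod.chineseRemainder hab with he
  set E : (Fin n → ZMod (a * b)) ≃ (Fin n → ZMod a) × (Fin n → ZMod b) :=
    (Equiv.piCongrRight fun _ => e.toEquiv).trans (Equiv.arrowProdEquivProdArrow _ _ _) with hE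
  set ma := fun x : Fin n → ZMod a => (S.map (Int.cast : ℤ → ZMod a)).mulVec x with hma
  set mb := fun x : Fin n → ZMod b => (S.map (Int.cast : ℤ → ZMod b)).mulVec x with hmb
  set mab := fun x : Fin n → ZMod (a * b) => (S.map (Int.cast : ℤ → ZMod (a * b))).mulVec x
    with hmab
  have hkey : ∀ x, E (mab x) = (ma ((E x).1), mb ((E x).2)) := by
    intro x
    have h1 : (E (mab x)).1 = ma ((E x).1) := by
      show (fun j => ((RingHom.fst (ZMod a) (ZMod b)).comp e.toRingHom) (mab x j))
          = ma (fun j => ((RingHom.fst (ZMod a) (ZMod b)).comp e.toRingHom) (x j))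
      exact (mulVec_map_comm S ((RingHom.fst (ZMod a) (ZMod b)).comp e.toRingHom) x).symm
    have h2 : (E (mab x)).2 = mb ((E x).2) := by
      show (fun j => ((RingHom.snd (ZMod a) (ZMod b)).comp e.toRingHom) (mab x j))
          = mb (fun j => ((RingHom.snd (ZMod a) (ZMod b)).comp e.toRingHom) (x j))
      exact (mulVec_map_comm S ((RingHom.snd (ZMod a) (ZMod b)).comp e.toRingHom) x).symm
    exact Prod.ext h1 h2
  have himg : E '' Set.range mab = (Set.range ma) ×ˢ (Set.range mb) := by
    ext ⟨y, z⟩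
    constructor
    · rintro ⟨w, ⟨x, rfl⟩, hw⟩
      rw [hkey x] at hw
      obtain ⟨h1, h2⟩ := Prod.mk.injEq .. ▸ hw
      exact ⟨⟨(E x).1, h1⟩, ⟨(E x).2, h2⟩⟩
    · rintro ⟨⟨u, hu⟩, ⟨v, hv⟩⟩
      refine ⟨mab (E.symm (u, v)), ⟨_, rfl⟩, ?_⟩
      rw [hkey (E.symm (u, v)), Equiv.apply_symm_apply]
      simp only at hu hv ⊢
      rw [hu, hv]
  have hcard : Nat.card (Set.range mab) = Nat.card (Set.range ma) * Nat.card (Set.range mb) := by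
    rw [← Nat.card_image_of_injective E.injective (Set.range mab), himg,
      Nat.card_congr (Equiv.Set.prod _ _), Nat.card_prod]
  rw [hcard, mul_pow]
  exact Nat.mul_le_mul ha hb

/-- STATEMENT 12: let `S` be an `n × n` integer matrix and `r` a natural number such that for
every prime `p` the rank of `S` mod `p` is at least `r`.  Then for every `N ≥ 1`, the image
of multiplication by `S` mod `N` on `(ZMod N)ⁿ` has at least `N^r` elements. -/
theorem image_card_ge_of_rank_mod_primes
    (n r : ℕ) (S : Matrix (Fin n) (Fin n) ℤ)
    (hrank : ∀ p : ℕ, p.Prime → r ≤ (S.map (Int.cast : ℤ → ZMod p)).rank)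
    (N : ℕ) (hN : 1 ≤ N) :
    N ^ r ≤ Nat.card
      (Set.range fun x : Fin n → ZMod N => (S.map (Int.cast : ℤ → ZMod N)).mulVec x) := by
  induction N using Nat.recOnPosPrimePosCoprime with
  | prime_pow p k hp hk =>
      have hp' : p.Prime := hp
      exact prime_pow_case n r S p k hp' (hrank p hp')
  | zero => exact absurd hN (by norm_num)
  | one =>
      have h2 := prime_pow_case n r S 2 0 Nat.prime_two (hrank 2 Nat.prime_two)
      simpa using h2
  | coprime a b ha1 hb1 hab iha ihb =>
      exact crt_step n r S a b (by omega) (by omega) hab (iha (by omega)) (ihb (by omega))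

end
end

section
/- Let E and F be orthogonal projections on a finite-dimensional complex inner product space and let G be the orthogonal projection onto (range E) ∩ (range F). Then the anticommutator inequality E∘F + F∘E ≥ −‖E∘F − G‖·(E + F) holds; that is, for every vector ψ, re⟪ψ, (E∘F + F∘E)ψ⟫ + ‖E∘F − G‖·(re⟪ψ, Eψ⟫ + re⟪ψ, Fψ⟫) ≥ 0, where ‖·‖ denotes the operator norm. -/
section

variable {H : Type*} [NormedAddCommGroup H] [InnerProductSpace ℂ H] [FiniteDimensional ℂ H]

/-- The orthogonal projection onto a subspace, as a continuous endomorphism. -/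
noncomputable def projOnto (K : Submodule ℂ H) : H →L[ℂ] H :=
  K.subtypeL.comp K.orthogonalProjectionOnto

/-- STATEMENT 14: for orthogonal projections `E`, `F` on a finite-dimensional complex inner
product space and `G` the orthogonal projection onto `range E ⊓ range F`, one has the
anticommutator bound `E∘F + F∘E ≥ −‖E∘F − G‖·(E + F)`. -/
theorem anticommutator_lower_bound
    (E F : H →L[ℂ] H)
    (hE2 : E.comp E = E) (hF2 : F.comp F = F)
    (hEsa : ∀ ψ φ : H, (inner ℂ (E ψ) φ : ℂ) = inner ℂ ψ (E φ))
    (hFsa : ∀ ψ φ : H, (inner ℂ (F ψ) φ : ℂ) = inner ℂ ψ (F φ)) :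
    ∀ ψ : H,
      0 ≤ (inner ℂ ψ ((E.comp F + F.comp E) ψ) : ℂ).re +
        ‖E.comp F - projOnto (LinearMap.range (E : H →ₗ[ℂ] H) ⊓ LinearMap.range (F : H →ₗ[ℂ] H))‖ *
          ((inner ℂ ψ (E ψ) : ℂ).re + (inner ℂ ψ (F ψ) : ℂ).re) := by
  intro ψ
  set K : Submodule ℂ H := LinearMap.range (E : H →ₗ[ℂ] H) ⊓ LinearMap.range (F : H →ₗ[ℂ] H) with hK
  set G : H →L[ℂ] H := projOnto K with hGdef
  set T : H →L[ℂ] H := E.comp F - G with hTdef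
  have hEE : ∀ x, E (E x) = E x := by
    intro x; exact congrArg (fun f => f x) hE2
  have hFF : ∀ x, F (F x) = F x := by
    intro x; exact congrArg (fun f => f x) hF2
  have hGmem : ∀ x : H, G x ∈ K := fun x => (K.orthogonalProjectionOnto x).2
  have hEG : ∀ x, E (G x) = G x := by
    intro x
    obtain ⟨y, hy⟩ := (hGmem x).1
    rw [← hy]; exact hEE y
  have hFG : ∀ x, F (G x) = G x := by
    intro x
    obtain ⟨y, hy⟩ := (hGmem x).2
    rw [← hy]; exact hFF y
  have hGsa : ∀ x y : H, (inner ℂ (G x) y : ℂ) = inner ℂ x (G y) := by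
    intro x y
    exact Submodule.inner_starProjection_left_eq_right K x y
  have hGF : ∀ x, G (F x) = G x := by
    intro x
    apply ext_inner_left ℂ
    intro y
    calc (inner ℂ y (G (F x)) : ℂ) = inner ℂ (G y) (F x) := (hGsa y (F x)).symm
      _ = inner ℂ (F (G y)) x := (hFsa (G y) x).symm
      _ = inner ℂ (G y) x := by rw [hFG]
      _ = inner ℂ y (G x) := hGsa y x
  have hGidem : ∀ x, G (G x) = G x := by
    intro x
    exact K.starProjection_eq_self_iff.mpr (hGmem x)
  -- key identity
  have hTF : T (F ψ) = E (F ψ) - G ψ := by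
    simp only [hTdef, ContinuousLinearMap.sub_apply, ContinuousLinearMap.comp_apply]
    rw [hFF, hGF]
  have key : (inner ℂ ψ (T ψ) : ℂ) = inner ℂ (E ψ) (T (F ψ)) := by
    rw [hTF]
    rw [hEsa]
    simp only [hTdef, ContinuousLinearMap.sub_apply, ContinuousLinearMap.comp_apply,
      map_sub, hEE, hEG]
  have hbound : ‖(inner ℂ ψ (T ψ) : ℂ)‖ ≤ ‖T‖ * (‖E ψ‖ * ‖F ψ‖) := by
    rw [key]
    calc ‖(inner ℂ (E ψ) (T (F ψ)) : ℂ)‖ ≤ ‖E ψ‖ * ‖T (F ψ)‖ := norm_inner_le_norm _ _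
      _ ≤ ‖E ψ‖ * (‖T‖ * ‖F ψ‖) := by
          exact mul_le_mul_of_nonneg_left (T.le_opNorm _) (norm_nonneg _)
      _ = ‖T‖ * (‖E ψ‖ * ‖F ψ‖) := by ring
  have hre : |(inner ℂ ψ (T ψ) : ℂ).re| ≤ ‖T‖ * (‖E ψ‖ * ‖F ψ‖) :=
    le_trans (Complex.abs_re_le_norm _) hbound
  have hGpos : (inner ℂ ψ (G ψ) : ℂ).re = ‖G ψ‖ ^ 2 := by
    have : (inner ℂ ψ (G ψ) : ℂ) = inner ℂ (G ψ) (G ψ) := by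
      calc (inner ℂ ψ (G ψ) : ℂ) = inner ℂ ψ (G (G ψ)) := by rw [hGidem]
        _ = inner ℂ (G ψ) (G ψ) := (hGsa _ _).symm
    rw [this]
    simpa using inner_self_eq_norm_sq (𝕜 := ℂ) (G ψ)
  have hEnorm : (inner ℂ ψ (E ψ) : ℂ).re = ‖E ψ‖ ^ 2 := by
    have : (inner ℂ ψ (E ψ) : ℂ) = inner ℂ (E ψ) (E ψ) := by
      rw [hEsa, hEE]
    rw [this]
    simpa using inner_self_eq_norm_sq (𝕜 := ℂ) (E ψ)
  have hFnorm : (inner ℂ ψ (F ψ) : ℂ).re = ‖F ψ‖ ^ 2 := by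
    have : (inner ℂ ψ (F ψ) : ℂ) = inner ℂ (F ψ) (F ψ) := by
      rw [hFsa, hFF]
    rw [this]
    simpa using inner_self_eq_norm_sq (𝕜 := ℂ) (F ψ)
  -- re⟨ψ, FEψ⟩ = re⟨ψ, EFψ⟩
  have hFE : (inner ℂ ψ (F (E ψ)) : ℂ).re = (inner ℂ ψ (E (F ψ)) : ℂ).re := by
    have h1 : (inner ℂ ψ (F (E ψ)) : ℂ) = inner ℂ (F ψ) (E ψ) := by rw [hFsa]
    have h2 : (inner ℂ ψ (E (F ψ)) : ℂ) = inner ℂ (E ψ) (F ψ) := by rw [hEsa]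
    rw [h1, h2, ← inner_conj_symm (F ψ) (E ψ)]
    exact Complex.conj_re _
  have hEF_split : (inner ℂ ψ (E (F ψ)) : ℂ).re = (inner ℂ ψ (T ψ) : ℂ).re + (inner ℂ ψ (G ψ) : ℂ).re := by
    have : (inner ℂ ψ (E (F ψ)) : ℂ) = inner ℂ ψ (T ψ) + inner ℂ ψ (G ψ) := by
      simp [hTdef, ContinuousLinearMap.sub_apply, ContinuousLinearMap.comp_apply,
        inner_sub_right]
    rw [this, Complex.add_re]
  simp only [ContinuousLinearMap.add_apply, ContinuousLinearMap.comp_apply, inner_add_right,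
    Complex.add_re]
  rw [hFE, hEF_split, hEnorm, hFnorm, hGpos]
  have hTnn : (0:ℝ) ≤ ‖T‖ := norm_nonneg _
  have hGnn : (0:ℝ) ≤ ‖G ψ‖ ^ 2 := sq_nonneg _
  have hr : -(‖T‖ * (‖E ψ‖ * ‖F ψ‖)) ≤ (inner ℂ ψ (T ψ) : ℂ).re := neg_le_of_abs_le hre
  nlinarith [sq_nonneg (‖E ψ‖ - ‖F ψ‖)]

end
end
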